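/- arXiv:2007.13016 — 11 statements merged into one kernel-verified Lean document; each statement's English description precedes it below -/
import Mathlib

section
/- Let H = (V,E) be a hypergraph and let j, l ≥ 0 be integers. For every S ⊆ V with |S| = l + j, the number of distinct nonempty traces of edges of E on S is at most δ*(H[S])·l + T[H,j]. Consequently T[H, l + j] ≤ δ̌(H)·l + T[H,j]. -/
open Finset

variable {V : Type*}

/-- Degree of a vertex `x` in a hypergraph with edge set `F`:
the number of edges containing `x`. -/
def hdeg [DecidableEq V] (F : Finset (Finset V)) (x : V) : ℕ :=
  (F.filter fun e => x ∈ e).card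

/-- Minimum degree over the vertex set `S` of a hypergraph with edge set `F`
(`0` if `S` is empty). -/
def hminDeg [DecidableEq V] (F : Finset (Finset V)) (S : Finset V) : ℕ :=
  if h : S.Nonempty then S.inf' h (hdeg F) else 0

/-- Edge set of the restriction `H[S]`: the distinct traces `e ∩ S` of edges. -/
def hrestrict [DecidableEq V] (E : Finset (Finset V)) (S : Finset V) : Finset (Finset V) :=
  E.image fun e => e ∩ S

/-- Edge set of the pseudo induced subhypergraph on `S`: edges contained in `S`. -/
def hpseudo [DecidableEq V] (E : Finset (Finset V)) (S : Finset V) : Finset (Finset V) :=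
  E.filter fun e => e ⊆ S

/-- Degeneracy of the hypergraph with vertex set `W` and edge set `E`:
the largest minimum degree of an induced subhypergraph. -/
def degenOn [DecidableEq V] (E : Finset (Finset V)) (W : Finset V) : ℕ :=
  W.powerset.sup fun S => hminDeg (hrestrict E S) S

/-- Pseudo degeneracy of the hypergraph with vertex set `W` and edge set `E`. -/
def pdegenOn [DecidableEq V] (E : Finset (Finset V)) (W : Finset V) : ℕ :=
  W.powerset.sup fun S => hminDeg (hpseudo E S) S

/-- Reduced degeneracy of the hypergraph with vertex set `W` and edge set `E`:
the largest pseudo degeneracy of an induced subhypergraph. -/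
def rdegenOn [DecidableEq V] (E : Finset (Finset V)) (W : Finset V) : ℕ :=
  W.powerset.sup fun S => pdegenOn (hrestrict E S) S

def degen [DecidableEq V] [Fintype V] (E : Finset (Finset V)) : ℕ := degenOn E univ
def pdegen [DecidableEq V] [Fintype V] (E : Finset (Finset V)) : ℕ := pdegenOn E univ
def rdegen [DecidableEq V] [Fintype V] (E : Finset (Finset V)) : ℕ := rdegenOn E univ

/-- The distinct nonempty traces of the edges `E` on the set `S`. -/
def ntraces [DecidableEq V] (E : Finset (Finset V)) (S : Finset V) : Finset (Finset V) :=
  (hrestrict E S).erase ∅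

/-- The trace function `T[H,k]`: the largest number of distinct nonempty traces
of `E` on a `k`-element vertex subset. -/
def traceFn [DecidableEq V] [Fintype V] (E : Finset (Finset V)) (k : ℕ) : ℕ :=
  (univ.powerset.filter fun S : Finset V => S.card = k).sup fun S => (ntraces E S).card

lemma ntraces_card_le_traceFn [DecidableEq V] [Fintype V] (E : Finset (Finset V))
    (T : Finset V) : (ntraces E T).card ≤ traceFn E T.card := by
  apply Finset.le_sup (f := fun S => (ntraces E S).card)
  simp [Finset.mem_filter, Finset.mem_powerset]

lemma main_lemma [DecidableEq V] [Fintype V] (E : Finset (Finset V)) (S : Finset V) (j : ℕ) :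
    ∀ T : Finset V, T ⊆ S → j ≤ T.card →
      ((hrestrict E S).filter fun t => t ⊆ T ∧ t ≠ ∅).card
        ≤ pdegenOn (hrestrict E S) S * (T.card - j) + traceFn E j := by
  intro T
  induction T using Finset.strongInduction with
  | _ T ih =>
    intro hTS hjT
    rcases eq_or_lt_of_le hjT with heq | hlt
    · -- base case: |T| = j; the counted sets are nonempty traces on T
      have hsub : ((hrestrict E S).filter fun t => t ⊆ T ∧ t ≠ ∅) ⊆ ntraces E T := by
        intro t ht
        simp only [Finset.mem_filter] at ht
        obtain ⟨htF, htT, htne⟩ := ht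
        simp only [hrestrict, Finset.mem_image] at htF
        obtain ⟨e, heE, rfl⟩ := htF
        have : e ∩ T = e ∩ S := by
          apply Finset.Subset.antisymm
          · exact Finset.inter_subset_inter (le_refl e) hTS
          · intro y hy
            simp only [Finset.mem_inter] at hy ⊢
            exact ⟨hy.1, htT (Finset.mem_inter.2 hy)⟩
        refine Finset.mem_erase.2 ⟨htne, ?_⟩
        simp only [ntraces, hrestrict, Finset.mem_image]
        exact ⟨e, heE, this⟩
      calc ((hrestrict E S).filter fun t => t ⊆ T ∧ t ≠ ∅).card
          ≤ (ntraces E T).card := Finset.card_le_card hsub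
        _ ≤ traceFn E T.card := ntraces_card_le_traceFn E T
        _ = traceFn E j := by rw [← heq]
        _ ≤ pdegenOn (hrestrict E S) S * (T.card - j) + traceFn E j := Nat.le_add_left _ _
    · -- inductive step: |T| > j; remove a vertex of minimum pseudo-degree
      set F := hrestrict E S with hF
      have hTne : T.Nonempty := Finset.card_pos.mp (lt_of_le_of_lt (Nat.zero_le j) hlt)
      obtain ⟨x, hxT, hxmin⟩ := Finset.exists_mem_eq_inf' hTne (hdeg (hpseudo F T))
      -- the pseudo-degree of x is at most the pseudo degeneracy
      have hdx : hdeg (hpseudo F T) x ≤ pdegenOn F S := by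
        rw [← hxmin]
        have h1 : T.inf' hTne (hdeg (hpseudo F T)) = hminDeg (hpseudo F T) T := by
          simp [hminDeg, hTne]
        rw [h1]
        exact Finset.le_sup (f := fun T => hminDeg (hpseudo F T) T)
          (Finset.mem_powerset.2 hTS)
      -- split the counted family
      have hsplit : (F.filter fun t => t ⊆ T ∧ t ≠ ∅)
          ⊆ (F.filter fun t => t ⊆ T.erase x ∧ t ≠ ∅) ∪ (F.filter fun t => t ⊆ T ∧ x ∈ t) := by
        intro t ht
        simp only [Finset.mem_filter] at ht
        obtain ⟨htF, htT, htne⟩ := ht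
        by_cases hx : x ∈ t
        · exact Finset.mem_union_right _ (Finset.mem_filter.2 ⟨htF, htT, hx⟩)
        · refine Finset.mem_union_left _ (Finset.mem_filter.2 ⟨htF, ?_, htne⟩)
          intro y hy
          exact Finset.mem_erase.2 ⟨fun h => hx (h ▸ hy), htT hy⟩
      have hdeg_eq : (F.filter fun t => t ⊆ T ∧ x ∈ t).card = hdeg (hpseudo F T) x := by
        simp only [hdeg, hpseudo, Finset.filter_filter]
      have hcard_erase : (T.erase x).card = T.card - 1 := Finset.card_erase_of_mem hxT
      have hjT' : j ≤ (T.erase x).card := by omega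
      have hTS' : T.erase x ⊆ S := (Finset.erase_subset x T).trans hTS
      have hIH := ih (T.erase x) (Finset.erase_ssubset hxT) hTS' hjT'
      have hcc : (F.filter fun t => t ⊆ T ∧ t ≠ ∅).card
          ≤ (F.filter fun t => t ⊆ T.erase x ∧ t ≠ ∅).card
            + (F.filter fun t => t ⊆ T ∧ x ∈ t).card :=
        le_trans (Finset.card_le_card hsplit) (Finset.card_union_le _ _)
      have harith : pdegenOn F S * ((T.erase x).card - j) + traceFn E j + pdegenOn F S
          = pdegenOn F S * (T.card - j) + traceFn E j := by
        have h2 : T.card - j = ((T.erase x).card - j) + 1 := by omega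
        rw [h2, Nat.mul_succ]; ring
      calc (F.filter fun t => t ⊆ T ∧ t ≠ ∅).card
          ≤ (F.filter fun t => t ⊆ T.erase x ∧ t ≠ ∅).card
            + (F.filter fun t => t ⊆ T ∧ x ∈ t).card := hcc
        _ ≤ (pdegenOn F S * ((T.erase x).card - j) + traceFn E j) + pdegenOn F S := by
            rw [hdeg_eq]; exact Nat.add_le_add hIH hdx
        _ = pdegenOn F S * (T.card - j) + traceFn E j := harith

lemma stmt4_aux [DecidableEq V] [Fintype V] (E : Finset (Finset V)) (j l : ℕ)
    (S : Finset V) (hS : S.card = l + j) :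
    (ntraces E S).card ≤ pdegenOn (hrestrict E S) S * l + traceFn E j := by
  have hall : ∀ t ∈ hrestrict E S, t ⊆ S := by
    intro t ht
    simp only [hrestrict, Finset.mem_image] at ht
    obtain ⟨e, _, rfl⟩ := ht
    exact Finset.inter_subset_right
  have hkey := main_lemma E S j S (le_refl S) (by omega)
  have heq : ((hrestrict E S).filter fun t => t ⊆ S ∧ t ≠ ∅) = ntraces E S := by
    ext t
    simp only [Finset.mem_filter, ntraces, Finset.mem_erase]
    constructor
    · rintro ⟨h1, _, h3⟩; exact ⟨h3, h1⟩
    · rintro ⟨h1, h2⟩; exact ⟨h2, hall t h2, h1⟩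
  rw [heq] at hkey
  have : S.card - j = l := by omega
  rwa [this] at hkey

/-- for integers `j, l ≥ 0` and every `S ⊆ V` with `|S| = l + j`, the
number of distinct nonempty traces of `E` on `S` is at most `δ*(H[S])·l + T[H,j]`;
consequently `T[H, l + j] ≤ δ̌(H)·l + T[H,j]`. -/
theorem stmt4 [DecidableEq V] [Fintype V] (E : Finset (Finset V)) (j l : ℕ) :
    (∀ S : Finset V, S.card = l + j →
      (ntraces E S).card ≤ pdegenOn (hrestrict E S) S * l + traceFn E j) ∧
    traceFn E (l + j) ≤ rdegen E * l + traceFn E j := by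
  constructor
  · exact fun S hS => stmt4_aux E j l S hS
  · apply Finset.sup_le
    intro S hS
    simp only [Finset.mem_filter, Finset.mem_powerset] at hS
    have h1 := stmt4_aux E j l S hS.2
    have h2 : pdegenOn (hrestrict E S) S ≤ rdegen E :=
      Finset.le_sup (f := fun S => pdegenOn (hrestrict E S) S)
        (Finset.mem_powerset.2 (Finset.subset_univ S))
    calc (ntraces E S).card ≤ pdegenOn (hrestrict E S) S * l + traceFn E j := h1
      _ ≤ rdegen E * l + traceFn E j := Nat.add_le_add_right (Nat.mul_le_mul_right l h2) _
end

section
/- For every hypergraph H = (V,E) and every integer k ≥ 0, the trace function satisfies T[H,k] ≤ δ̌(H)·k; in particular T[H,k] ≤ δ̂(H)·k. -/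
open Finset

variable {V : Type*}

lemma hdeg_mono [DecidableEq V] {F F' : Finset (Finset V)} (h : F ⊆ F') (x : V) :
    hdeg F x ≤ hdeg F' x :=
  Finset.card_le_card (Finset.filter_subset_filter _ h)

lemma hminDeg_mono [DecidableEq V] {F F' : Finset (Finset V)} (h : F ⊆ F') (S : Finset V) :
    hminDeg F S ≤ hminDeg F' S := by
  unfold hminDeg
  split
  · exact Finset.le_inf' _ _ fun b hb => le_trans (Finset.inf'_le _ hb) (hdeg_mono h b)
  · exact le_rfl

lemma key [DecidableEq V] (d : ℕ) (S : Finset V) : ∀ F : Finset (Finset V),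
    (∀ e ∈ F, e ⊆ S) →
    (∀ T ⊆ S, T.Nonempty → ∃ y ∈ T, hdeg (hpseudo F T) y ≤ d) →
    (F.erase ∅).card ≤ d * S.card := by
  induction S using Finset.strongInduction with
  | _ S ih =>
    intro F hsub hmin
    rcases S.eq_empty_or_nonempty with rfl | hS
    · have : F.erase ∅ = ∅ := by
        ext e
        simp only [Finset.mem_erase, Finset.notMem_empty, iff_false, not_and]
        intro hne heF
        exact hne (Finset.subset_empty.mp (hsub e heF))
      simp [this]
    · obtain ⟨x, hxS, hxd⟩ := hmin S le_rfl hS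
      have hps : hpseudo F S = F := Finset.filter_true_of_mem hsub
      rw [hps] at hxd
      set F' := F.filter (fun e => x ∉ e) with hF'
      have hsub' : ∀ e ∈ F', e ⊆ S.erase x := by
        intro e he
        rw [hF', Finset.mem_filter] at he
        intro a ha
        exact Finset.mem_erase.mpr ⟨fun h => he.2 (h ▸ ha), hsub e he.1 ha⟩
      have hmin' : ∀ T ⊆ S.erase x, T.Nonempty → ∃ y ∈ T, hdeg (hpseudo F' T) y ≤ d := by
        intro T hT hTne
        obtain ⟨y, hyT, hyd⟩ := hmin T (hT.trans (Finset.erase_subset _ _)) hTne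
        exact ⟨y, hyT, le_trans
          (hdeg_mono (Finset.filter_subset_filter _ (Finset.filter_subset _ _)) y) hyd⟩
      have hcount : F.erase ∅ ⊆ (F'.erase ∅) ∪ F.filter (fun e => x ∈ e) := by
        intro e he
        rw [Finset.mem_erase] at he
        by_cases hx : x ∈ e
        · exact Finset.mem_union_right _ (Finset.mem_filter.mpr ⟨he.2, hx⟩)
        · exact Finset.mem_union_left _
            (Finset.mem_erase.mpr ⟨he.1, Finset.mem_filter.mpr ⟨he.2, hx⟩⟩)
      have hcard : (F.erase ∅).card ≤ (F'.erase ∅).card + d := by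
        calc (F.erase ∅).card ≤ ((F'.erase ∅) ∪ F.filter (fun e => x ∈ e)).card :=
              Finset.card_le_card hcount
          _ ≤ (F'.erase ∅).card + (F.filter (fun e => x ∈ e)).card :=
              Finset.card_union_le _ _
          _ ≤ (F'.erase ∅).card + d := by exact Nat.add_le_add_left hxd _
      have hrec := ih (S.erase x) (Finset.erase_ssubset hxS) F' hsub' hmin'
      have hSc : S.card = (S.erase x).card + 1 := (Finset.card_erase_add_one hxS).symm
      calc (F.erase ∅).card ≤ (F'.erase ∅).card + d := hcard
        _ ≤ d * (S.erase x).card + d := Nat.add_le_add_right hrec d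
        _ = d * S.card := by rw [hSc]; ring

/-- for every hypergraph `H` and integer `k ≥ 0`, one has
`T[H,k] ≤ δ̌(H)·k`; in particular `T[H,k] ≤ δ̂(H)·k`. -/
theorem stmt5 [DecidableEq V] [Fintype V] (E : Finset (Finset V)) (k : ℕ) :
    traceFn E k ≤ rdegen E * k ∧ traceFn E k ≤ degen E * k := by
  have hrd : rdegen E ≤ degen E := by
    unfold rdegen rdegenOn degen degenOn pdegenOn
    apply Finset.sup_le
    intro S _
    apply Finset.sup_le
    intro T hT
    rw [Finset.mem_powerset] at hT
    have hsub : hpseudo (hrestrict E S) T ⊆ hrestrict E T := by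
      intro f hf
      rw [hpseudo, Finset.mem_filter] at hf
      obtain ⟨hf1, hf2⟩ := hf
      rw [hrestrict, Finset.mem_image] at hf1 ⊢
      obtain ⟨e, he, rfl⟩ := hf1
      refine ⟨e, he, ?_⟩
      apply Finset.Subset.antisymm
      · exact Finset.inter_subset_inter_left hT
      · exact Finset.subset_inter (Finset.inter_subset_left) hf2
    exact le_trans (hminDeg_mono hsub T)
      (Finset.le_sup (f := fun T => hminDeg (hrestrict E T) T)
        (Finset.mem_powerset.mpr (Finset.subset_univ T)))
  have hmain : traceFn E k ≤ rdegen E * k := by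
    apply Finset.sup_le
    intro S hS
    rw [Finset.mem_filter] at hS
    rw [ntraces, ← hS.2]
    apply key (rdegen E) S (hrestrict E S)
    · intro e he
      rw [hrestrict, Finset.mem_image] at he
      obtain ⟨f, _, rfl⟩ := he
      exact Finset.inter_subset_right
    · intro T hT hTne
      have h1 : hminDeg (hpseudo (hrestrict E S) T) T ≤ rdegen E := by
        unfold rdegen rdegenOn pdegenOn
        exact le_trans
          (Finset.le_sup (f := fun T => hminDeg (hpseudo (hrestrict E S) T) T)
            (Finset.mem_powerset.mpr hT))
          (Finset.le_sup (f := fun S => S.powerset.sup fun T => hminDeg (hpseudo (hrestrict E S) T) T)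
            (Finset.mem_powerset.mpr (Finset.subset_univ S)))
      rw [hminDeg, dif_pos hTne] at h1
      obtain ⟨y, hyT, hy⟩ := Finset.exists_mem_eq_inf' hTne (hdeg (hpseudo (hrestrict E S) T))
      exact ⟨y, hyT, hy ▸ h1⟩
  exact ⟨hmain, hmain.trans (Nat.mul_le_mul_right k hrd)⟩
end

section
/- Let H = (V,E) be a hypergraph with E nonempty, ∅ ∉ E, and admitting a distinguishing transversal. Then for every integer j with 0 ≤ j ≤ dt(H), one has |E| ≤ δ̌(H)·(dt(H) − j) + T[H,j]; equivalently, dt(H) ≥ (|E| − T[H,j])/δ̌(H) + j. -/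
open Finset

variable {V : Type*}

/-- `S` is a distinguishing transversal of the hypergraph with edge set `E`:
it meets every edge and distinct edges have distinct traces on `S`. -/
def IsDT [DecidableEq V] (E : Finset (Finset V)) (S : Finset V) : Prop :=
  (∀ e ∈ E, (e ∩ S).Nonempty) ∧ ∀ e ∈ E, ∀ f ∈ E, e ∩ S = f ∩ S → e = f

/-- The distinguishing transversal number `dt(H)`: the minimum size of a
distinguishing transversal. -/
noncomputable def dtNum [DecidableEq V] [Fintype V] (E : Finset (Finset V)) : ℕ :=
  sInf {k | ∃ S : Finset V, IsDT E S ∧ S.card = k}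

lemma hdeg_ntraces_eq [DecidableEq V] (E : Finset (Finset V)) (S : Finset V) (x : V) :
    hdeg (ntraces E S) x = hdeg (hrestrict E S) x := by
  unfold hdeg ntraces
  congr 1
  ext t
  simp only [mem_filter, mem_erase]
  constructor
  · rintro ⟨⟨_, ht⟩, hx⟩; exact ⟨ht, hx⟩
  · rintro ⟨ht, hx⟩
    refine ⟨⟨?_, ht⟩, hx⟩
    rintro rfl; exact absurd hx (notMem_empty x)

lemma exists_low_deg [DecidableEq V] [Fintype V] (E : Finset (Finset V))
    (S : Finset V) (hS : S.Nonempty) :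
    ∃ x ∈ S, hdeg (hrestrict E S) x ≤ rdegen E := by
  obtain ⟨x, hx, hxe⟩ := S.exists_mem_eq_inf' hS (hdeg (hrestrict E S))
  refine ⟨x, hx, ?_⟩
  have hps : hpseudo (hrestrict E S) S = hrestrict E S := by
    unfold hpseudo
    apply filter_true_of_mem
    intro t ht
    simp only [hrestrict, mem_image] at ht
    obtain ⟨e, _, rfl⟩ := ht
    exact inter_subset_right
  have h1 : hdeg (hrestrict E S) x = hminDeg (hpseudo (hrestrict E S) S) S := by
    rw [hps, hminDeg, dif_pos hS, ← hxe]
  have h2 : hminDeg (hpseudo (hrestrict E S) S) S ≤ pdegenOn (hrestrict E S) S := by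
    unfold pdegenOn
    exact Finset.le_sup (f := fun T => hminDeg (hpseudo (hrestrict E S) T) T)
      (mem_powerset.2 Subset.rfl)
  have h3 : pdegenOn (hrestrict E S) S ≤ rdegen E := by
    unfold rdegen rdegenOn
    exact Finset.le_sup (f := fun T => pdegenOn (hrestrict E T) T)
      (mem_powerset.2 (subset_univ S))
  omega

lemma ntraces_card_step [DecidableEq V] (E : Finset (Finset V)) (S : Finset V) (x : V) :
    (ntraces E S).card ≤ (ntraces E (S.erase x)).card + hdeg (ntraces E S) x := by
  classical
  have hsplit := card_filter_add_card_filter_not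
    (s := ntraces E S) (p := fun t => x ∈ t)
  have hsub : (ntraces E S).filter (fun t => ¬ x ∈ t) ⊆ ntraces E (S.erase x) := by
    intro t ht
    simp only [mem_filter, ntraces, mem_erase, hrestrict, mem_image] at ht ⊢
    obtain ⟨⟨hne, e, he, rfl⟩, hx⟩ := ht
    refine ⟨hne, e, he, ?_⟩
    ext y
    simp only [mem_inter, mem_erase]
    constructor
    · rintro ⟨hy, -, hyS⟩; exact ⟨hy, hyS⟩
    · rintro ⟨hy, hyS⟩
      refine ⟨hy, ?_, hyS⟩
      rintro rfl
      exact hx (mem_inter.2 ⟨hy, hyS⟩)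
  have := card_le_card hsub
  have : ((ntraces E S).filter (fun t => x ∈ t)).card = hdeg (ntraces E S) x := rfl
  omega

lemma main_bound [DecidableEq V] [Fintype V] (E : Finset (Finset V)) :
    ∀ d : ℕ, ∀ S : Finset V, ∀ j : ℕ, S.card = j + d →
      (ntraces E S).card ≤ rdegen E * d + traceFn E j := by
  intro d
  induction d with
  | zero =>
    intro S j hcard
    have : (ntraces E S).card ≤ traceFn E j := by
      unfold traceFn
      exact Finset.le_sup (f := fun T => (ntraces E T).card)
        (mem_filter.2 ⟨mem_powerset.2 (subset_univ S), by omega⟩)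
    omega
  | succ d ih =>
    intro S j hcard
    have hS : S.Nonempty := by
      rw [← card_pos, hcard]; omega
    obtain ⟨x, hx, hdle⟩ := exists_low_deg E S hS
    have hstep := ntraces_card_step E S x
    have herase : (S.erase x).card = j + d := by
      rw [card_erase_of_mem hx, hcard]; omega
    have := ih (S.erase x) j herase
    rw [hdeg_ntraces_eq] at hstep
    have : rdegen E * (d + 1) = rdegen E * d + rdegen E := by ring
    omega

/-- if `E` is a nonempty edge set, `∅ ∉ E`, and a distinguishing
transversal exists, then for every `0 ≤ j ≤ dt(H)` one has
`|E| ≤ δ̌(H)·(dt(H) − j) + T[H,j]`, i.e. `dt(H) ≥ (|E| − T[H,j])/δ̌(H) + j`. -/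
theorem stmt6 [DecidableEq V] [Fintype V] (E : Finset (Finset V))
    (hE : E.Nonempty) (hne : ∅ ∉ E) (hdt : ∃ S : Finset V, IsDT E S) :
    ∀ j : ℕ, j ≤ dtNum E →
      E.card ≤ rdegen E * (dtNum E - j) + traceFn E j := by
  intro j hj
  have hne' : {k | ∃ S : Finset V, IsDT E S ∧ S.card = k}.Nonempty := by
    obtain ⟨S, hS⟩ := hdt
    exact ⟨S.card, S, hS, rfl⟩
  obtain ⟨S, hSdt, hScard'⟩ := Nat.sInf_mem hne'
  have hScard : S.card = dtNum E := hScard'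
  have hEcard : E.card = (ntraces E S).card := by
    have h1 : (hrestrict E S).card = E.card := by
      apply card_image_of_injOn
      intro e he f hf hef
      exact hSdt.2 e he f hf hef
    have h2 : ∅ ∉ hrestrict E S := by
      simp only [hrestrict, mem_image]
      rintro ⟨e, he, h⟩
      have := hSdt.1 e he
      rw [h] at this
      exact not_nonempty_empty this
    rw [ntraces, erase_eq_of_notMem h2, h1]
  have hcard : S.card = j + (dtNum E - j) := by
    rw [hScard]; omega
  have := main_bound E (dtNum E - j) S j hcard
  omega
end

section
/- Let H = (V,E) be a hypergraph with E nonempty, ∅ ∉ E, and admitting a distinguishing transversal. Then for every integer j with 0 ≤ j ≤ dt(H), one has |E| ≤ δ̌(H)·(dt(H) − j) + 2^j − 1; equivalently, dt(H) ≥ (|E| − 2^j + 1)/δ̌(H) + j. -/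
open Finset

variable {V : Type*}

lemma key_lemma [DecidableEq V] [Fintype V] (E : Finset (Finset V)) :
    ∀ T : Finset V, ∀ j : ℕ, j ≤ T.card →
      (ntraces E T).card ≤ rdegen E * (T.card - j) + (2 ^ j - 1) := by
  intro T
  induction T using Finset.strongInduction with
  | _ T ih =>
    intro j hj
    rcases eq_or_lt_of_le hj with heq | hlt
    · -- base case: j = |T|
      have hsub : ntraces E T ⊆ T.powerset.erase ∅ := by
        intro f hf
        simp only [ntraces, hrestrict, mem_erase, mem_image] at hf
        obtain ⟨hfne, e, _, rfl⟩ := hf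
        exact mem_erase.2 ⟨hfne, mem_powerset.2 (inter_subset_right)⟩
      calc (ntraces E T).card ≤ (T.powerset.erase ∅).card := card_le_card hsub
        _ = 2 ^ T.card - 1 := by
            rw [card_erase_of_mem (mem_powerset.2 (empty_subset T)), card_powerset]
        _ = 2 ^ j - 1 := by rw [heq]
        _ ≤ _ := Nat.le_add_left _ _
    · -- inductive step: j < |T|
      have hTne : T.Nonempty := card_pos.1 (lt_of_le_of_lt (Nat.zero_le j) hlt)
      set F := hrestrict E T with hF
      set d := rdegen E with hd
      have hFsub : ∀ e ∈ F, e ⊆ T := by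
        intro e he
        simp only [hF, hrestrict, mem_image] at he
        obtain ⟨e', _, rfl⟩ := he
        exact inter_subset_right
      have hpseudoF : hpseudo F T = F := filter_true_of_mem hFsub
      have hmin : hminDeg F T ≤ d := by
        have h1 : pdegenOn F T ≤ rdegenOn E univ :=
          Finset.le_sup (f := fun S => pdegenOn (hrestrict E S) S)
            (mem_powerset.2 (subset_univ T))
        have h2 : hminDeg (hpseudo F T) T ≤ pdegenOn F T :=
          Finset.le_sup (f := fun S => hminDeg (hpseudo F S) S)
            (mem_powerset.2 Subset.rfl)
        rw [hpseudoF] at h2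
        exact h2.trans h1
      obtain ⟨x, hx, hxeq⟩ := Finset.exists_mem_eq_inf' hTne (hdeg F)
      have hxd : hdeg F x ≤ d := by
        rw [← hxeq]
        simpa [hminDeg, hTne] using hmin
      -- split ntraces E T
      have hsplit : (ntraces E T).card ≤ (ntraces E (T.erase x)).card + hdeg F x := by
        have h5 : (ntraces E T).filter (fun f => x ∉ f) ⊆ ntraces E (T.erase x) := by
          intro f hf
          simp only [mem_filter, ntraces, hrestrict, mem_erase, mem_image] at hf ⊢
          obtain ⟨⟨hfne, e, he, rfl⟩, hxf⟩ := hf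
          refine ⟨hfne, e, he, ?_⟩
          rw [Finset.inter_comm, Finset.erase_inter, Finset.inter_comm,
            Finset.erase_eq_of_notMem hxf]
        have h6 : (ntraces E T).filter (fun f => x ∈ f) ⊆ F.filter (fun f => x ∈ f) := by
          apply filter_subset_filter
          exact erase_subset _ _
        calc (ntraces E T).card
            = ((ntraces E T).filter (fun f => x ∉ f)).card
              + ((ntraces E T).filter (fun f => x ∈ f)).card := by
              have h7 := card_filter_add_card_filter_not
                (s := ntraces E T) (p := fun f => x ∈ f)
              omega
          _ ≤ (ntraces E (T.erase x)).card + hdeg F x := by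
              exact Nat.add_le_add (card_le_card h5) (card_le_card h6)
      have hje : j ≤ (T.erase x).card := by
        rw [card_erase_of_mem hx]; omega
      have hIH := ih (T.erase x) (erase_ssubset hx) j hje
      rw [card_erase_of_mem hx] at hIH
      have hmul : d * (T.card - 1 - j) + d = d * (T.card - j) := by
        rw [← Nat.mul_succ]
        congr 1
        omega
      calc (ntraces E T).card ≤ (ntraces E (T.erase x)).card + hdeg F x := hsplit
        _ ≤ (d * (T.card - 1 - j) + (2 ^ j - 1)) + d := Nat.add_le_add hIH hxd
        _ = d * (T.card - j) + (2 ^ j - 1) := by rw [← hmul]; ring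

/-- if `E` is a nonempty edge set, `∅ ∉ E`, and a distinguishing
transversal exists, then for every `0 ≤ j ≤ dt(H)` one has
`|E| ≤ δ̌(H)·(dt(H) − j) + 2^j − 1`, i.e. `dt(H) ≥ (|E| − 2^j + 1)/δ̌(H) + j`. -/
theorem stmt7 [DecidableEq V] [Fintype V] (E : Finset (Finset V))
    (hE : E.Nonempty) (hne : ∅ ∉ E) (hdt : ∃ S : Finset V, IsDT E S) :
    ∀ j : ℕ, j ≤ dtNum E →
      E.card ≤ rdegen E * (dtNum E - j) + (2 ^ j - 1) := by
  have hset : {k | ∃ S : Finset V, IsDT E S ∧ S.card = k}.Nonempty := by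
    obtain ⟨S, hS⟩ := hdt
    exact ⟨S.card, S, hS, rfl⟩
  obtain ⟨S, hDT, hcard⟩ := Nat.sInf_mem hset
  have hEcard : E.card = (ntraces E S).card := by
    have himg : (E.image fun e => e ∩ S).card = E.card :=
      card_image_of_injOn (fun e he f hf hef => hDT.2 e he f hf hef)
    have hnm : ∅ ∉ E.image fun e => e ∩ S := by
      simp only [mem_image, not_exists]
      rintro e ⟨he, hee⟩
      exact ((hDT.1 e he).ne_empty) hee
    rw [ntraces, hrestrict, erase_eq_of_notMem hnm, himg]
  intro j hj
  have hdn : dtNum E = S.card := by unfold dtNum; exact hcard.symm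
  rw [hEcard, hdn]
  exact key_lemma E S j (hdn ▸ hj)
end

section
/- Let G be a finite simple graph on n vertices in which no two distinct vertices have equal closed neighborhoods, and let H be its closed neighborhood hypergraph. Then for every integer j with 0 ≤ j ≤ γ^ID(G), one has n ≤ δ̌(H)·(γ^ID(G) − j) + T[H,j]; equivalently, γ^ID(G) ≥ (n − T[H,j])/δ̌(H) + j. -/
open Finset

variable {V : Type*}

/-- The edge set of the closed neighborhood hypergraph of a graph `G`:
the distinct closed neighborhoods `N[x]`. -/
def closedNH [DecidableEq V] [Fintype V] (G : SimpleGraph V) [DecidableRel G.Adj] :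
    Finset (Finset V) :=
  univ.image fun x => insert x (G.neighborFinset x)

/-- The edge set of the open neighborhood hypergraph of a graph `G`:
the distinct open neighborhoods `N(x)`. -/
def openNH [DecidableEq V] [Fintype V] (G : SimpleGraph V) [DecidableRel G.Adj] :
    Finset (Finset V) :=
  univ.image fun x => G.neighborFinset x

/-- `D` is an identifying code of `G`: it is dominating, and distinct vertices
have distinct closed neighborhood traces on `D`. -/
def IsIdCode [DecidableEq V] [Fintype V] (G : SimpleGraph V) [DecidableRel G.Adj]
    (D : Finset V) : Prop :=
  (∀ x : V, ((insert x (G.neighborFinset x)) ∩ D).Nonempty) ∧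
  ∀ x y : V, x ≠ y →
    (insert x (G.neighborFinset x)) ∩ D ≠ (insert y (G.neighborFinset y)) ∩ D

/-- The identifying code number `γ^ID(G)`. -/
noncomputable def gammaID [DecidableEq V] [Fintype V] (G : SimpleGraph V)
    [DecidableRel G.Adj] : ℕ :=
  sInf {k | ∃ D : Finset V, IsIdCode G D ∧ D.card = k}

/-! A minimum identifying code `D` separates all `n` vertices by their nonempty
traces on `D`, so `n ≤ T[H, γ^ID]`. Deleting from a `(k+1)`-set `S` a vertex `v` of minimum
degree in `H[S]` loses only the traces through `v`; since `H[S]` is its own pseudo induced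
subhypergraph on `S`, there are at most `δ̌(H)` of them. Hence `T[H, k+1] ≤ T[H, k] + δ̌(H)`,
and iterating from `j` to `γ^ID` gives the bound. -/

section Hypergraph

variable [DecidableEq V]

lemma exists_mem_hdeg_eq_hminDeg (F : Finset (Finset V)) {S : Finset V} (hS : S.Nonempty) :
    ∃ v ∈ S, hdeg F v = hminDeg F S := by
  obtain ⟨v, hv, heq⟩ := S.exists_mem_eq_inf' hS (hdeg F)
  exact ⟨v, hv, by rw [hminDeg, dif_pos hS, heq]⟩

lemma hminDeg_hpseudo_le_pdegenOn (E : Finset (Finset V)) {S W : Finset V} (hSW : S ⊆ W) :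
    hminDeg (hpseudo E S) S ≤ pdegenOn E W :=
  le_sup (f := fun T => hminDeg (hpseudo E T) T) (mem_powerset.mpr hSW)

lemma pdegenOn_hrestrict_le_rdegenOn (E : Finset (Finset V)) {S W : Finset V} (hSW : S ⊆ W) :
    pdegenOn (hrestrict E S) S ≤ rdegenOn E W :=
  le_sup (f := fun T => pdegenOn (hrestrict E T) T) (mem_powerset.mpr hSW)

lemma hpseudo_hrestrict_self (E : Finset (Finset V)) (S : Finset V) :
    hpseudo (hrestrict E S) S = hrestrict E S :=
  filter_true_of_mem fun _ ht => by
    obtain ⟨e, -, rfl⟩ := mem_image.mp ht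
    exact inter_subset_right

lemma hminDeg_hrestrict_le_rdegenOn (E : Finset (Finset V)) {S W : Finset V} (hSW : S ⊆ W) :
    hminDeg (hrestrict E S) S ≤ rdegenOn E W :=
  calc hminDeg (hrestrict E S) S
      = hminDeg (hpseudo (hrestrict E S) S) S := by rw [hpseudo_hrestrict_self]
    _ ≤ pdegenOn (hrestrict E S) S := hminDeg_hpseudo_le_pdegenOn _ subset_rfl
    _ ≤ rdegenOn E W := pdegenOn_hrestrict_le_rdegenOn E hSW

lemma filter_notMem_ntraces_subset (E : Finset (Finset V)) (S : Finset V) (v : V) :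
    (ntraces E S).filter (v ∉ ·) ⊆ ntraces E (S.erase v) := by
  intro t ht
  simp only [mem_filter, ntraces, mem_erase, hrestrict, mem_image] at ht ⊢
  obtain ⟨⟨hne, e, he, rfl⟩, hvt⟩ := ht
  refine ⟨hne, e, he, ?_⟩
  ext a
  simp only [mem_inter, mem_erase]
  exact ⟨fun ⟨ha, hb⟩ => ⟨ha, hb.2⟩,
    fun ⟨ha, hb⟩ => ⟨ha, fun hav => hvt (mem_inter.mpr ⟨hav ▸ ha, hav ▸ hb⟩), hb⟩⟩

lemma card_ntraces_le_hdeg_add (E : Finset (Finset V)) (S : Finset V) (v : V) :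
    #(ntraces E S) ≤ hdeg (hrestrict E S) v + #(ntraces E (S.erase v)) := by
  rw [← card_filter_add_card_filter_not (s := ntraces E S) (v ∈ ·)]
  exact add_le_add (card_le_card (filter_subset_filter _ (erase_subset _ _)))
    (card_le_card (filter_notMem_ntraces_subset E S v))

variable [Fintype V]

lemma card_ntraces_le_traceFn (E : Finset (Finset V)) (S : Finset V) :
    #(ntraces E S) ≤ traceFn E #S :=
  le_sup (f := fun T => #(ntraces E T)) (by simp)

lemma traceFn_succ_le (E : Finset (Finset V)) (k : ℕ) :
    traceFn E (k + 1) ≤ traceFn E k + rdegen E := by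
  refine Finset.sup_le fun S hS => ?_
  have hcard : #S = k + 1 := (mem_filter.mp hS).2
  obtain ⟨v, hvS, hv⟩ :=
    exists_mem_hdeg_eq_hminDeg (hrestrict E S) (card_pos.mp (hcard ▸ k.add_one_pos))
  have hdeg_le : hdeg (hrestrict E S) v ≤ rdegen E :=
    hv ▸ hminDeg_hrestrict_le_rdegenOn E (subset_univ S)
  have herase : traceFn E #(S.erase v) = traceFn E k := by
    rw [card_erase_of_mem hvS, hcard, Nat.add_sub_cancel]
  calc #(ntraces E S)
      ≤ hdeg (hrestrict E S) v + #(ntraces E (S.erase v)) := card_ntraces_le_hdeg_add E S v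
    _ ≤ rdegen E + traceFn E k := herase ▸ add_le_add hdeg_le (card_ntraces_le_traceFn E _)
    _ = traceFn E k + rdegen E := add_comm _ _

lemma traceFn_add_le (E : Finset (Finset V)) (j d : ℕ) :
    traceFn E (j + d) ≤ traceFn E j + rdegen E * d := by
  induction d with
  | zero => simp
  | succ d ih =>
    calc traceFn E (j + d + 1)
        ≤ traceFn E (j + d) + rdegen E := traceFn_succ_le E (j + d)
      _ ≤ traceFn E j + rdegen E * (d + 1) := by rw [mul_add_one, ← add_assoc]; gcongr

end Hypergraph

section IdentifyingCode

variable [DecidableEq V] [Fintype V] {G : SimpleGraph V} [DecidableRel G.Adj]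

lemma isIdCode_univ
    (hdist : Function.Injective fun x => insert x (G.neighborFinset x)) :
    IsIdCode G univ :=
  ⟨fun x => ⟨x, mem_inter.mpr ⟨mem_insert_self _ _, mem_univ x⟩⟩,
    fun x y hxy h => hxy (hdist (by simpa only [inter_univ] using h))⟩

lemma exists_isIdCode_card_eq_gammaID
    (hdist : Function.Injective fun x => insert x (G.neighborFinset x)) :
    ∃ D, IsIdCode G D ∧ #D = gammaID G :=
  Nat.sInf_mem (s := {k | ∃ D : Finset V, IsIdCode G D ∧ #D = k})
    ⟨_, univ, isIdCode_univ hdist, rfl⟩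

lemma IsIdCode.card_le_card_ntraces {D : Finset V} (hD : IsIdCode G D) :
    Fintype.card V ≤ #(ntraces (closedNH G) D) := by
  rw [← card_univ]
  refine card_le_card_of_injOn (fun x => insert x (G.neighborFinset x) ∩ D) ?_ ?_
  · intro x _
    simp only [mem_coe, ntraces, mem_erase, hrestrict, mem_image]
    exact ⟨nonempty_iff_ne_empty.mp (hD.1 x), _, mem_image_of_mem _ (mem_univ x), rfl⟩
  · intro x _ y _ h
    by_contra hxy
    exact hD.2 x y hxy h

end IdentifyingCode

/-- if no two distinct vertices of the `n`-vertex graph `G` have equal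
closed neighborhoods and `H` is the closed neighborhood hypergraph of `G`, then for
every `0 ≤ j ≤ γ^ID(G)` one has `n ≤ δ̌(H)·(γ^ID(G) − j) + T[H,j]`, i.e.
`γ^ID(G) ≥ (n − T[H,j])/δ̌(H) + j`. -/
theorem stmt11 [DecidableEq V] [Fintype V] (G : SimpleGraph V) [DecidableRel G.Adj]
    (hdist : ∀ x y : V,
      insert x (G.neighborFinset x) = insert y (G.neighborFinset y) → x = y) :
    ∀ j : ℕ, j ≤ gammaID G →
      Fintype.card V ≤
        rdegen (closedNH G) * (gammaID G - j) + traceFn (closedNH G) j := by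
  intro j hj
  obtain ⟨D, hD, hcard⟩ := exists_isIdCode_card_eq_gammaID fun x y => hdist x y
  calc Fintype.card V
      ≤ #(ntraces (closedNH G) D) := hD.card_le_card_ntraces
    _ ≤ traceFn (closedNH G) (j + (gammaID G - j)) := by
        rw [Nat.add_sub_cancel' hj, ← hcard]; exact card_ntraces_le_traceFn _ D
    _ ≤ traceFn (closedNH G) j + rdegen (closedNH G) * (gammaID G - j) := traceFn_add_le _ _ _
    _ = rdegen (closedNH G) * (gammaID G - j) + traceFn (closedNH G) j := add_comm _ _
end

section
/- Let G be a finite simple graph on n vertices with no isolated vertices and in which no two distinct vertices have equal open neighborhoods, and let H° be its open neighborhood hypergraph. Then for every integer j with 0 ≤ j ≤ γ^OLD(G), one has n ≤ δ̌(H°)·(γ^OLD(G) − j) + T[H°,j]; equivalently, γ^OLD(G) ≥ (n − T[H°,j])/δ̌(H°) + j. -/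
open Finset

variable {V : Type*}

/-- `D` is an open locating-dominating set of `G`: it is total dominating, and
distinct vertices have distinct open neighborhood traces on `D`. -/
def IsOLD [DecidableEq V] [Fintype V] (G : SimpleGraph V) [DecidableRel G.Adj]
    (D : Finset V) : Prop :=
  (∀ x : V, (G.neighborFinset x ∩ D).Nonempty) ∧
  ∀ x y : V, x ≠ y → G.neighborFinset x ∩ D ≠ G.neighborFinset y ∩ D

/-- The open location-domination number `γ^OLD(G)`. -/
noncomputable def gammaOLD [DecidableEq V] [Fintype V] (G : SimpleGraph V)
    [DecidableRel G.Adj] : ℕ :=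
  sInf {k | ∃ D : Finset V, IsOLD G D ∧ D.card = k}

section AuxProof

variable [DecidableEq V]

lemma trace_erase (e S : Finset V) (v : V) : e ∩ S.erase v = (e ∩ S).erase v := by
  ext x
  simp only [mem_inter, mem_erase]
  tauto

/-- Collapse set of `v` on `S`. -/
def collSet (E : Finset (Finset V)) (S : Finset V) (v : V) : Finset (Finset V) :=
  (ntraces E S).filter fun t => v ∈ t ∧ (t.erase v ∈ ntraces E S ∨ t.erase v = ∅)

lemma lemA (E : Finset (Finset V)) (S : Finset V) (v : V) :
    (ntraces E S).card ≤ (collSet E S v).card + (ntraces E (S.erase v)).card := by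
  classical
  set A := ntraces E S with hA
  set C := collSet E S v with hC
  have hCA : C ⊆ A := filter_subset _ _
  have hmaps : ∀ t ∈ A \ C, t.erase v ∈ ntraces E (S.erase v) := by
    intro t ht
    rw [mem_sdiff] at ht
    obtain ⟨htA, htC⟩ := ht
    have htA' := htA
    rw [hA, ntraces, mem_erase] at htA'
    obtain ⟨htne, htr⟩ := htA'
    rw [hrestrict, mem_image] at htr
    obtain ⟨e, he, rfl⟩ := htr
    rw [ntraces, mem_erase]
    constructor
    · intro h0
      by_cases hv : v ∈ e ∩ S
      · exact htC (mem_filter.mpr ⟨htA, hv, Or.inr h0⟩)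
      · exact htne (by rwa [erase_eq_of_notMem hv] at h0)
    · rw [hrestrict, mem_image]
      exact ⟨e, he, trace_erase e S v⟩
  have hinj : Set.InjOn (fun t : Finset V => t.erase v) ((A \ C : Finset (Finset V)) : Set (Finset V)) := by
    intro t1 h1 t2 h2 heq
    simp only [Finset.coe_sdiff, Set.mem_diff, Finset.mem_coe] at h1 h2
    simp only at heq
    by_cases hv1 : v ∈ t1 <;> by_cases hv2 : v ∈ t2
    · rw [← insert_erase hv1, ← insert_erase hv2, heq]
    · exfalso
      apply h1.2
      rw [hC, collSet, mem_filter]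
      refine ⟨h1.1, hv1, Or.inl ?_⟩
      rw [heq, erase_eq_of_notMem hv2]
      exact h2.1
    · exfalso
      apply h2.2
      rw [hC, collSet, mem_filter]
      refine ⟨h2.1, hv2, Or.inl ?_⟩
      rw [← heq, erase_eq_of_notMem hv1]
      exact h1.1
    · rwa [erase_eq_of_notMem hv1, erase_eq_of_notMem hv2] at heq
  have hcard : (A \ C).card ≤ (ntraces E (S.erase v)).card :=
    Finset.card_le_card_of_injOn _ hmaps hinj
  have hsd : (A \ C).card = A.card - C.card := card_sdiff_of_subset hCA
  have hle : C.card ≤ A.card := card_le_card hCA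
  omega

lemma lemB [Fintype V] (E : Finset (Finset V)) (S : Finset V) (hS : S.Nonempty) :
    ∃ v ∈ S, (collSet E S v).card ≤ rdegen E := by
  classical
  set F := hrestrict E S with hF
  have hAF : ntraces E S ⊆ F := erase_subset _ _
  set P := F.filter (fun t => ∃ v ∈ t, (t.erase v ∈ ntraces E S ∨ t.erase v = ∅))
    with hP
  have hCP : ∀ v, collSet E S v ⊆ P := by
    intro v t ht
    rw [collSet, mem_filter] at ht
    exact mem_filter.mpr ⟨hAF ht.1, v, ht.2.1, ht.2.2⟩
  rcases P.eq_empty_or_nonempty with hPe | hPne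
  · obtain ⟨v, hv⟩ := hS
    refine ⟨v, hv, ?_⟩
    have : collSet E S v = ∅ := subset_empty.mp (hPe ▸ hCP v)
    simp [this]
  · set U := P.sup id with hU
    have hUS : U ⊆ S := by
      have h : U ≤ S := by
        apply Finset.sup_le
        intro t ht
        have : t ∈ F := mem_of_mem_filter t ht
        rw [hF, hrestrict, mem_image] at this
        obtain ⟨e, _, rfl⟩ := this
        exact le_iff_subset.mpr inter_subset_right
      exact h
    have htU : ∀ t ∈ P, t ⊆ U := fun t ht => Finset.le_sup (f := id) ht
    have hUne : U.Nonempty := by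
      obtain ⟨t, ht⟩ := hPne
      have ht' := ht
      rw [hP, mem_filter] at ht'
      obtain ⟨-, v, hv, -⟩ := ht'
      exact ⟨v, htU t ht hv⟩
    obtain ⟨v0, hv0U, hv0⟩ := Finset.exists_mem_eq_inf' hUne (hdeg (hpseudo F U))
    refine ⟨v0, hUS hv0U, ?_⟩
    have hsub : collSet E S v0 ⊆ (hpseudo F U).filter (fun t => v0 ∈ t) := by
      intro t ht
      have htP : t ∈ P := hCP v0 ht
      rw [collSet, mem_filter] at ht
      refine mem_filter.mpr ⟨?_, ht.2.1⟩
      rw [hpseudo, mem_filter]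
      exact ⟨hAF ht.1, htU t htP⟩
    have h1 : (collSet E S v0).card ≤ hdeg (hpseudo F U) v0 :=
      card_le_card hsub
    have h2 : hminDeg (hpseudo F U) U = hdeg (hpseudo F U) v0 := by
      rw [hminDeg, dif_pos hUne, hv0]
    have h3 : hminDeg (hpseudo F U) U ≤ pdegenOn F S := by
      rw [pdegenOn]
      exact Finset.le_sup (f := fun T => hminDeg (hpseudo F T) T) (mem_powerset.mpr hUS)
    have h4 : pdegenOn F S ≤ rdegen E := by
      rw [rdegen, rdegenOn]
      exact Finset.le_sup (f := fun T => pdegenOn (hrestrict E T) T)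
        (mem_powerset.mpr (subset_univ S))
    omega

lemma lemC [Fintype V] (E : Finset (Finset V)) (j : ℕ) :
    ∀ k : ℕ, ∀ S : Finset V, S.card = j + k →
      (ntraces E S).card ≤ rdegen E * k + traceFn E j := by
  intro k
  induction k with
  | zero =>
    intro S hS
    have : (ntraces E S).card ≤ traceFn E j := by
      rw [traceFn]
      have hmem : S ∈ univ.powerset.filter fun T : Finset V => T.card = j := by
        rw [mem_filter, mem_powerset]
        exact ⟨subset_univ S, by omega⟩
      exact Finset.le_sup (f := fun T => (ntraces E T).card) hmem
    omega
  | succ k ih =>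
    intro S hS
    have hne : S.Nonempty := card_pos.mp (by omega)
    obtain ⟨v, hv, hC⟩ := lemB E S hne
    have h1 := lemA E S v
    have h2 := ih (S.erase v) (by rw [card_erase_of_mem hv]; omega)
    have h3 : rdegen E * (k + 1) = rdegen E * k + rdegen E := by ring
    omega

end AuxProof

/-- if the `n`-vertex graph `G` has no isolated vertices, no two
distinct vertices of `G` have equal open neighborhoods, and `H°` is the open
neighborhood hypergraph of `G`, then for every `0 ≤ j ≤ γ^OLD(G)` one has
`n ≤ δ̌(H°)·(γ^OLD(G) − j) + T[H°,j]`, i.e. `γ^OLD(G) ≥ (n − T[H°,j])/δ̌(H°) + j`. -/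
theorem stmt12 [DecidableEq V] [Fintype V] (G : SimpleGraph V) [DecidableRel G.Adj]
    (hiso : ∀ x : V, (G.neighborFinset x).Nonempty)
    (hdist : ∀ x y : V, G.neighborFinset x = G.neighborFinset y → x = y) :
    ∀ j : ℕ, j ≤ gammaOLD G →
      Fintype.card V ≤
        rdegen (openNH G) * (gammaOLD G - j) + traceFn (openNH G) j := by
  classical
  intro j hj
  have huniv : IsOLD G univ := by
    constructor
    · intro x
      simpa [inter_univ] using hiso x
    · intro x y hxy h
      rw [inter_univ, inter_univ] at h
      exact hxy (hdist x y h)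
  have hne : {k | ∃ D : Finset V, IsOLD G D ∧ D.card = k}.Nonempty :=
    ⟨(univ : Finset V).card, univ, huniv, rfl⟩
  obtain ⟨D, hD, hDcard⟩ : ∃ D : Finset V, IsOLD G D ∧ D.card = gammaOLD G :=
    Nat.sInf_mem hne
  have hmem : ∀ x : V, G.neighborFinset x ∩ D ∈ ntraces (openNH G) D := by
    intro x
    rw [ntraces, mem_erase]
    constructor
    · exact (hD.1 x).ne_empty
    · rw [hrestrict, mem_image]
      exact ⟨G.neighborFinset x, mem_image_of_mem _ (mem_univ x), rfl⟩
  have hinj : Set.InjOn (fun x => G.neighborFinset x ∩ D) ↑(univ : Finset V) := by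
    intro x _ y _ h
    by_contra hxy
    exact hD.2 x y hxy h
  have hcard : Fintype.card V ≤ (ntraces (openNH G) D).card := by
    rw [← Finset.card_univ]
    exact Finset.card_le_card_of_injOn _ (fun x _ => hmem x) hinj
  have hkey := lemC (openNH G) j (gammaOLD G - j) D (by rw [hDcard]; omega)
  omega
end

section
/- Let T be a tree on n ≥ 2 vertices and let H be its closed neighborhood hypergraph. Then the degeneracy of H satisfies δ̂(H) ≤ 3. -/
open Finset

variable {V : Type*}

open SimpleGraph in

/-- In a tree, a vertex has at most one neighbor at distance (from root `r`)
not exceeding its own. -/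
lemma tree_unique_low [DecidableEq V] (G : SimpleGraph V) (hT : G.IsTree) (r x : V) {y₁ y₂ : V}
    (h₁ : G.Adj x y₁) (h₂ : G.Adj x y₂)
    (d₁ : G.dist r y₁ ≤ G.dist r x) (d₂ : G.dist r y₂ ≤ G.dist r x) : y₁ = y₂ := by
  have hconn := hT.isConnected
  have build : ∀ (y : V), G.Adj x y → G.dist r y ≤ G.dist r x →
      ∃ q : G.Walk r x, q.IsPath ∧ q.getVert (q.length - 1) = y := by
    intro y hxy hdy
    obtain ⟨w, hwp, hwl⟩ := hconn.exists_path_of_dist r y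
    have hxsup : x ∉ w.support := by
      intro hx
      have hsplit := congr_arg Walk.length (w.take_spec hx)
      rw [Walk.length_append] at hsplit
      have h1 : G.dist r x ≤ (w.takeUntil x hx).length := SimpleGraph.dist_le _
      have h2 : G.dist x y ≤ (w.dropUntil x hx).length := SimpleGraph.dist_le _
      have hxy0 : G.dist x y = 0 := by omega
      have : x = y := (hconn.dist_eq_zero_iff).mp hxy0
      exact hxy.ne this
    refine ⟨w.concat hxy.symm, ?_, ?_⟩
    · rw [← Walk.isPath_reverse_iff, Walk.reverse_concat, Walk.cons_isPath_iff]
      refine ⟨hwp.reverse, ?_⟩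
      rwa [Walk.support_reverse, List.mem_reverse]
    · rw [Walk.length_concat]
      simp only [Nat.add_sub_cancel]
      rw [Walk.concat_eq_append, Walk.getVert_append]
      simp [lt_irrefl]
  obtain ⟨q₁, hq₁, hg₁⟩ := build y₁ h₁ d₁
  obtain ⟨q₂, hq₂, hg₂⟩ := build y₂ h₂ d₂
  have : (⟨q₁, hq₁⟩ : G.Path r x) = ⟨q₂, hq₂⟩ := hT.IsAcyclic.path_unique _ _
  have hq : q₁ = q₂ := congr_arg Subtype.val this
  rw [hq] at hg₁
  rw [← hg₁, ← hg₂]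

/-- if `T` is a tree on `n ≥ 2` vertices and `H` is its closed
neighborhood hypergraph, then `δ̂(H) ≤ 3`. -/
theorem stmt14 [DecidableEq V] [Fintype V] (G : SimpleGraph V) [DecidableRel G.Adj]
    (hT : G.IsTree) (hn : 2 ≤ Fintype.card V) :
    degen (closedNH G) ≤ 3 := by
  have hV : Nonempty V := Fintype.card_pos_iff.mp (by omega)
  obtain ⟨r⟩ := hV
  rw [degen, degenOn]
  apply Finset.sup_le
  intro S _
  rw [hminDeg]
  split_ifs with hS
  · obtain ⟨x, hxS, hmax⟩ := S.exists_max_image (fun v => G.dist r v) hS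
    refine le_trans (Finset.inf'_le _ hxS) ?_
    rw [hdeg]
    set N : V → Finset V := fun y => insert y (G.neighborFinset y) with hN
    have key : ((hrestrict (closedNH G) S).filter (fun e => x ∈ e)) ⊆
        insert (N x ∩ S) (insert {x}
          (((G.neighborFinset x).filter (fun y => G.dist r y ≤ G.dist r x)).image
            (fun y => N y ∩ S))) := by
      intro t ht
      simp only [hrestrict, closedNH, Finset.mem_filter, Finset.mem_image] at ht
      obtain ⟨⟨e, ⟨y, -, rfl⟩, rfl⟩, hxt⟩ := ht
      have hxNy : x ∈ N y := (Finset.mem_inter.mp hxt).1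
      rw [hN] at hxNy
      simp only [Finset.mem_insert, SimpleGraph.mem_neighborFinset] at hxNy
      rcases hxNy with rfl | hadj
      · exact Finset.mem_insert_self _ _
      · have hadj' : G.Adj x y := hadj.symm
        by_cases hd : G.dist r y ≤ G.dist r x
        · refine Finset.mem_insert_of_mem (Finset.mem_insert_of_mem ?_)
          exact Finset.mem_image_of_mem _ (Finset.mem_filter.mpr
            ⟨SimpleGraph.mem_neighborFinset G x y |>.mpr hadj', hd⟩)
        · push_neg at hd
          have heq : N y ∩ S = {x} := by
            apply Finset.Subset.antisymm
            · intro z hz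
              obtain ⟨hzN, hzS⟩ := Finset.mem_inter.mp hz
              have hzd : G.dist r z ≤ G.dist r x := hmax z hzS
              rw [hN] at hzN
              simp only [Finset.mem_insert, SimpleGraph.mem_neighborFinset] at hzN
              rcases hzN with rfl | hadjz
              · omega
              · have : z = x := tree_unique_low G hT r y hadjz hadj (by omega) (by omega)
                simp [this]
            · intro z hz
              rw [Finset.mem_singleton] at hz
              subst hz
              exact hxt
          rw [heq]
          exact Finset.mem_insert_of_mem (Finset.mem_insert_self _ _)
    calc ((hrestrict (closedNH G) S).filter (fun e => x ∈ e)).card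
        ≤ _ := Finset.card_le_card key
      _ ≤ 3 := by
          have h1 : (((G.neighborFinset x).filter (fun y => G.dist r y ≤ G.dist r x)).image
              (fun y => N y ∩ S)).card ≤ 1 := by
            refine le_trans (Finset.card_image_le) ?_
            rw [Finset.card_le_one]
            intro a ha b hb
            rw [Finset.mem_filter, SimpleGraph.mem_neighborFinset] at ha hb
            exact tree_unique_low G hT r x ha.1 hb.1 ha.2 hb.2
          have h2 := Finset.card_insert_le ({x} : Finset V)
            (((G.neighborFinset x).filter (fun y => G.dist r y ≤ G.dist r x)).image
              (fun y => N y ∩ S))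
          have h3 := Finset.card_insert_le (N x ∩ S) (insert ({x} : Finset V)
            (((G.neighborFinset x).filter (fun y => G.dist r y ≤ G.dist r x)).image
              (fun y => N y ∩ S)))
          omega
  · omega
end

section
/- Let T be a tree on n ≥ 2 vertices with closed neighborhood hypergraph H and open neighborhood hypergraph H°. Then the pseudo degeneracies satisfy δ*(H) ≤ 2 and δ*(H°) ≤ 2. -/
open Finset

variable {V : Type*}

section TreeHelpers


variable [DecidableEq V] {G : SimpleGraph V}

lemma support_dist_le' {a u x : V} (p : G.Walk a u) (hx : x ∈ p.support) :
    G.dist a x + G.dist x u ≤ p.length := by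
  have h := p.take_spec hx
  have h1 : G.dist a x ≤ (p.takeUntil x hx).length := SimpleGraph.dist_le _
  have h2 : G.dist x u ≤ (p.dropUntil x hx).length := SimpleGraph.dist_le _
  have h3 : (p.takeUntil x hx).length + (p.dropUntil x hx).length = p.length := by
    rw [← SimpleGraph.Walk.length_append, h]
  omega

lemma tree_dist_adj_ne' (hT : G.IsTree) (a : V) {u b : V} (h : G.Adj u b) :
    G.dist a u ≠ G.dist a b := by
  intro heq
  obtain ⟨p, hp, hplen⟩ := hT.isConnected.exists_path_of_dist a u
  have hb : b ∉ p.support := by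
    intro hb
    have h2 := support_dist_le' p hb
    rw [hplen, heq] at h2
    have h0 : G.dist b u = 0 := by omega
    exact h.ne' ((hT.isConnected.dist_eq_zero_iff).mp h0)
  obtain ⟨q, hq, hqlen⟩ := hT.isConnected.exists_path_of_dist b a
  have hP1 : (SimpleGraph.Walk.cons h.symm p.reverse).IsPath := by
    rw [SimpleGraph.Walk.cons_isPath_iff]
    refine ⟨hp.reverse, ?_⟩
    simpa [SimpleGraph.Walk.support_reverse] using hb
  have heq2 := (hT.existsUnique_path b a).unique hP1 hq
  have hl : p.reverse.length + 1 = q.length := by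
    have := congrArg SimpleGraph.Walk.length heq2
    simpa [SimpleGraph.Walk.length_cons] using this
  rw [SimpleGraph.Walk.length_reverse, hplen, hqlen] at hl
  have hc : G.dist b a = G.dist a b := SimpleGraph.dist_comm
  omega

lemma tree_unique_closer' (hT : G.IsTree) {a b u w : V} (hu : G.Adj b u) (hw : G.Adj b w)
    (hdu : G.dist a u + 1 = G.dist a b) (hdw : G.dist a w + 1 = G.dist a b) : u = w := by
  by_contra hne
  obtain ⟨p, hp, hplen⟩ := hT.isConnected.exists_path_of_dist a u
  obtain ⟨q, hq, hqlen⟩ := hT.isConnected.exists_path_of_dist a w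
  have hbp : b ∉ p.support := by
    intro hb
    have h2 := support_dist_le' p hb
    rw [hplen] at h2
    omega
  have hbq : b ∉ q.support := by
    intro hb
    have h2 := support_dist_le' q hb
    rw [hqlen] at h2
    omega
  have hP1 : (SimpleGraph.Walk.cons hu p.reverse).IsPath := by
    rw [SimpleGraph.Walk.cons_isPath_iff]
    refine ⟨hp.reverse, ?_⟩
    simpa [SimpleGraph.Walk.support_reverse] using hbp
  have hP2 : (SimpleGraph.Walk.cons hw q.reverse).IsPath := by
    rw [SimpleGraph.Walk.cons_isPath_iff]
    refine ⟨hq.reverse, ?_⟩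
    simpa [SimpleGraph.Walk.support_reverse] using hbq
  have heq2 := (hT.existsUnique_path b a).unique hP1 hP2
  have hus : u ∈ q.support := by
    have h1 : u ∈ (SimpleGraph.Walk.cons hu p.reverse).support := by
      simp only [SimpleGraph.Walk.support_cons, SimpleGraph.Walk.support_reverse,
        List.mem_cons, List.mem_reverse]
      exact Or.inr p.end_mem_support
    rw [heq2] at h1
    simp only [SimpleGraph.Walk.support_cons, SimpleGraph.Walk.support_reverse,
      List.mem_cons, List.mem_reverse] at h1
    rcases h1 with h1 | h1
    · exact absurd h1 hu.ne'
    · exact h1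
  have h2 := support_dist_le' q hus
  rw [hqlen] at h2
  have h0 : G.dist u w = 0 := by omega
  exact hne ((hT.isConnected.dist_eq_zero_iff).mp h0)

lemma tree_adj_dist' (hT : G.IsTree) (a : V) {b y : V} (h : G.Adj b y) :
    G.dist a y + 1 = G.dist a b ∨ G.dist a y = G.dist a b + 1 := by
  have h1 : G.dist a y ≤ G.dist a b + 1 := by
    have ht := hT.isConnected.dist_triangle (u := a) (v := b) (w := y)
    have hd : G.dist b y = 1 := SimpleGraph.dist_eq_one_iff_adj.mpr h
    omega
  have h2 : G.dist a b ≤ G.dist a y + 1 := by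
    have ht := hT.isConnected.dist_triangle (u := a) (v := y) (w := b)
    have hd : G.dist y b = 1 := SimpleGraph.dist_eq_one_iff_adj.mpr h.symm
    omega
  have h3 := tree_dist_adj_ne' hT a h.symm
  omega

lemma card_le_two_of_subset_pair' {α : Type*} [DecidableEq α] {s : Finset α} {e1 e2 : α}
    (h : s ⊆ {e1, e2}) : s.card ≤ 2 :=
  le_trans (Finset.card_le_card h) ((Finset.card_insert_le _ _).trans (by simp))

end TreeHelpers

/-- if `T` is a tree on `n ≥ 2` vertices with closed and open
neighborhood hypergraphs `H` and `H°`, then `δ*(H) ≤ 2` and `δ*(H°) ≤ 2`. -/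

theorem stmt16 [DecidableEq V] [Fintype V] (G : SimpleGraph V) [DecidableRel G.Adj]
    (hT : G.IsTree) (hn : 2 ≤ Fintype.card V) :
    pdegen (closedNH G) ≤ 2 ∧ pdegen (openNH G) ≤ 2 := by
  constructor
  · -- closed neighborhood hypergraph
    unfold pdegen pdegenOn
    refine Finset.sup_le fun S _ => ?_
    unfold hminDeg
    split_ifs with hSne
    · obtain ⟨x, hxS, hxd⟩ : ∃ x ∈ S, hdeg (hpseudo (closedNH G) S) x ≤ 2 := by
        by_cases hA : ∃ y : V, insert y (G.neighborFinset y) ⊆ S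
        · have hAne : (univ.filter fun y : V => insert y (G.neighborFinset y) ⊆ S).Nonempty := by
            obtain ⟨a1, ha1⟩ := hA
            exact ⟨a1, Finset.mem_filter.mpr ⟨Finset.mem_univ _, ha1⟩⟩
          obtain ⟨a0, -⟩ := hA
          obtain ⟨b, hbA, hbmax⟩ := Finset.exists_max_image _ (fun y => G.dist a0 y) hAne
          rw [Finset.mem_filter] at hbA
          refine ⟨b, hbA.2 (Finset.mem_insert_self _ _), ?_⟩
          rw [hdeg]
          by_cases hp : ∃ y, G.Adj b y ∧ G.dist a0 y + 1 = G.dist a0 b ∧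
              insert y (G.neighborFinset y) ⊆ S
          · obtain ⟨p0, hadj0, hd0, -⟩ := hp
            refine card_le_two_of_subset_pair'
              (e1 := insert b (G.neighborFinset b))
              (e2 := insert p0 (G.neighborFinset p0)) ?_
            intro e he
            rw [Finset.mem_filter] at he
            obtain ⟨he1, hbe⟩ := he
            rw [hpseudo, Finset.mem_filter] at he1
            obtain ⟨he2, heS⟩ := he1
            rw [closedNH, Finset.mem_image] at he2
            obtain ⟨y, -, hy⟩ := he2
            subst hy
            rw [Finset.mem_insert] at hbe
            rcases hbe with hbe | hbe
            · rw [← hbe]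
              exact Finset.mem_insert_self _ _
            · rw [SimpleGraph.mem_neighborFinset] at hbe
              have hyle : G.dist a0 y ≤ G.dist a0 b :=
                hbmax y (Finset.mem_filter.mpr ⟨Finset.mem_univ _, heS⟩)
              have hdich := tree_adj_dist' hT a0 hbe.symm
              have hyd : G.dist a0 y + 1 = G.dist a0 b := by omega
              have hyp0 : y = p0 := tree_unique_closer' hT hbe.symm hadj0 hyd hd0
              subst hyp0
              exact Finset.mem_insert_of_mem (Finset.mem_singleton_self _)
          · refine card_le_two_of_subset_pair'
              (e1 := insert b (G.neighborFinset b))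
              (e2 := insert b (G.neighborFinset b)) ?_
            intro e he
            rw [Finset.mem_filter] at he
            obtain ⟨he1, hbe⟩ := he
            rw [hpseudo, Finset.mem_filter] at he1
            obtain ⟨he2, heS⟩ := he1
            rw [closedNH, Finset.mem_image] at he2
            obtain ⟨y, -, hy⟩ := he2
            subst hy
            rw [Finset.mem_insert] at hbe
            rcases hbe with hbe | hbe
            · rw [← hbe]
              exact Finset.mem_insert_self _ _
            · rw [SimpleGraph.mem_neighborFinset] at hbe
              have hyle : G.dist a0 y ≤ G.dist a0 b :=
                hbmax y (Finset.mem_filter.mpr ⟨Finset.mem_univ _, heS⟩)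
              have hdich := tree_adj_dist' hT a0 hbe.symm
              have hyd : G.dist a0 y + 1 = G.dist a0 b := by omega
              exact absurd ⟨y, hbe.symm, hyd, heS⟩ hp
        · obtain ⟨x, hx⟩ := hSne
          refine ⟨x, hx, ?_⟩
          rw [hdeg]
          have hemp : (hpseudo (closedNH G) S).filter (fun e => x ∈ e) = ∅ := by
            rw [Finset.eq_empty_iff_forall_notMem]
            intro e he
            rw [Finset.mem_filter] at he
            obtain ⟨he1, -⟩ := he
            rw [hpseudo, Finset.mem_filter] at he1
            obtain ⟨he2, heS⟩ := he1
            rw [closedNH, Finset.mem_image] at he2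
            obtain ⟨y, -, hy⟩ := he2
            exact hA ⟨y, hy ▸ heS⟩
          rw [hemp]
          simp
      exact le_trans (Finset.inf'_le _ hxS) hxd
    · exact Nat.zero_le 2
  · -- open neighborhood hypergraph
    unfold pdegen pdegenOn
    refine Finset.sup_le fun S _ => ?_
    unfold hminDeg
    split_ifs with hSne
    · obtain ⟨x, hxS, hxd⟩ : ∃ x ∈ S, hdeg (hpseudo (openNH G) S) x ≤ 2 := by
        by_cases hA : ∃ y : V, G.neighborFinset y ⊆ S
        · obtain ⟨a0, -⟩ := hA
          obtain ⟨b, hbS, hbmax⟩ := Finset.exists_max_image S (fun y => G.dist a0 y) hSne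
          refine ⟨b, hbS, ?_⟩
          rw [hdeg]
          by_cases hp : ∃ y, G.Adj b y ∧ G.dist a0 y + 1 = G.dist a0 b ∧
              G.neighborFinset y ⊆ S
          · obtain ⟨p0, hadj0, hd0, -⟩ := hp
            refine card_le_two_of_subset_pair'
              (e1 := G.neighborFinset p0) (e2 := ({b} : Finset V)) ?_
            intro e he
            rw [Finset.mem_filter] at he
            obtain ⟨he1, hbe⟩ := he
            rw [hpseudo, Finset.mem_filter] at he1
            obtain ⟨he2, heS⟩ := he1
            rw [openNH, Finset.mem_image] at he2
            obtain ⟨y, -, hy⟩ := he2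
            subst hy
            rw [SimpleGraph.mem_neighborFinset] at hbe
            have hdich := tree_adj_dist' hT a0 hbe.symm
            rcases hdich with hyd | hyd
            · have hyp0 : y = p0 := tree_unique_closer' hT hbe.symm hadj0 hyd hd0
              subst hyp0
              exact Finset.mem_insert_self _ _
            · have heq : G.neighborFinset y = ({b} : Finset V) := by
                apply Finset.ext
                intro z
                simp only [SimpleGraph.mem_neighborFinset, Finset.mem_singleton]
                constructor
                · intro hz
                  have hzS : z ∈ S := heS ((SimpleGraph.mem_neighborFinset G y z).mpr hz)
                  have hzle : G.dist a0 z ≤ G.dist a0 b := hbmax z hzS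
                  have hd2 := tree_adj_dist' hT a0 hz
                  have hzd : G.dist a0 z + 1 = G.dist a0 y := by omega
                  have hbd : G.dist a0 b + 1 = G.dist a0 y := by omega
                  exact tree_unique_closer' hT hz (hbe.symm.symm) hzd hbd
                · intro hz
                  rw [hz]
                  exact hbe
              rw [heq]
              exact Finset.mem_insert_of_mem (Finset.mem_singleton_self _)
          · refine card_le_two_of_subset_pair'
              (e1 := ({b} : Finset V)) (e2 := ({b} : Finset V)) ?_
            intro e he
            rw [Finset.mem_filter] at he
            obtain ⟨he1, hbe⟩ := he
            rw [hpseudo, Finset.mem_filter] at he1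
            obtain ⟨he2, heS⟩ := he1
            rw [openNH, Finset.mem_image] at he2
            obtain ⟨y, -, hy⟩ := he2
            subst hy
            rw [SimpleGraph.mem_neighborFinset] at hbe
            have hdich := tree_adj_dist' hT a0 hbe.symm
            rcases hdich with hyd | hyd
            · exact absurd ⟨y, hbe.symm, hyd, heS⟩ hp
            · have heq : G.neighborFinset y = ({b} : Finset V) := by
                apply Finset.ext
                intro z
                simp only [SimpleGraph.mem_neighborFinset, Finset.mem_singleton]
                constructor
                · intro hz
                  have hzS : z ∈ S := heS ((SimpleGraph.mem_neighborFinset G y z).mpr hz)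
                  have hzle : G.dist a0 z ≤ G.dist a0 b := hbmax z hzS
                  have hd2 := tree_adj_dist' hT a0 hz
                  have hzd : G.dist a0 z + 1 = G.dist a0 y := by omega
                  have hbd : G.dist a0 b + 1 = G.dist a0 y := by omega
                  exact tree_unique_closer' hT hz (hbe.symm.symm) hzd hbd
                · intro hz
                  rw [hz]
                  exact hbe
              rw [heq]
              exact Finset.mem_insert_self _ _
        · obtain ⟨x, hx⟩ := hSne
          refine ⟨x, hx, ?_⟩
          rw [hdeg]
          have hemp : (hpseudo (openNH G) S).filter (fun e => x ∈ e) = ∅ := by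
            rw [Finset.eq_empty_iff_forall_notMem]
            intro e he
            rw [Finset.mem_filter] at he
            obtain ⟨he1, -⟩ := he
            rw [hpseudo, Finset.mem_filter] at he1
            obtain ⟨he2, heS⟩ := he1
            rw [openNH, Finset.mem_image] at he2
            obtain ⟨y, -, hy⟩ := he2
            exact hA ⟨y, hy ▸ heS⟩
          rw [hemp]
          simp
      exact le_trans (Finset.inf'_le _ hxS) hxd
    · exact Nat.zero_le 2
end

section
/- Let T be a tree on n ≥ 4 vertices with L leaves and S support vertices. Then γ^LD(T) ≥ (n + 1 + 2(L − S))/3. -/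
open Finset

variable {V : Type*}

/-- `D` is a locating-dominating set of `G`: it is dominating, and distinct
vertices outside `D` have distinct open neighborhood traces on `D`. -/
def IsLD [DecidableEq V] [Fintype V] (G : SimpleGraph V) [DecidableRel G.Adj]
    (D : Finset V) : Prop :=
  (∀ x : V, ((insert x (G.neighborFinset x)) ∩ D).Nonempty) ∧
  ∀ x ∉ D, ∀ y ∉ D, x ≠ y → G.neighborFinset x ∩ D ≠ G.neighborFinset y ∩ D

/-- The location-domination number `γ^LD(G)`. -/
noncomputable def gammaLD [DecidableEq V] [Fintype V] (G : SimpleGraph V)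
    [DecidableRel G.Adj] : ℕ :=
  sInf {k | ∃ D : Finset V, IsLD G D ∧ D.card = k}

/-!
Fix a locating-dominating set `D`. Delete from the tree the set `K ⊆ D` consisting of the leaves
in `D` of support vertices in `D`, and of all leaves but a chosen one `rep s` of each support
vertex `s ∉ D` (all of these lie in `D`, as `D` dominates them). Then `D \ K` is still
locating-dominating in the pruned tree, and `|K| ≥ L - S` because a support vertex in `D` has at
most one leaf outside `D`. Slater's bound `n + 1 ≤ 3 γ^LD` for the pruned tree gives
`n - |K| + 1 ≤ 3 (|D| - |K|)`. That bound is a double count: vertices outside `D` with a single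
neighbour in `D` have distinct such neighbours, the others have at least two, and a tree has
`n - 1` edges. The pruned tree is never built; the leaves of `K` only enter through their `|K|`
pendant edges.
-/

namespace Finset

theorem two_mul_card_le_sum_card_add_card {α β : Type*} {A : Finset α} {B : Finset β}
    {t : α → Finset β} (hB : ∀ x ∈ A, t x ⊆ B) (hne : ∀ x ∈ A, (t x).Nonempty)
    (hinj : Set.InjOn t A) : 2 * #A ≤ ∑ x ∈ A, #(t x) + #B := by
  classical
  set A₁ := {x ∈ A | #(t x) = 1}
  have hA₁ : #A₁ ≤ #B := by
    refine card_le_card_of_forall_subsingleton (fun x b => t x = {b}) (fun x hx => ?_) ?_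
    · obtain ⟨b, hb⟩ := card_eq_one.1 (mem_filter.1 hx).2
      exact ⟨b, hB x (mem_filter.1 hx).1 (hb ▸ mem_singleton_self b), hb⟩
    · rintro b - x ⟨hx, hxb⟩ y ⟨hy, hyb⟩
      exact hinj (mem_filter.1 hx).1 (mem_filter.1 hy).1 (hxb.trans hyb.symm)
  have hsum : 2 * #A ≤ ∑ x ∈ A, #(t x) + #A₁ := by
    rw [card_filter, ← sum_add_distrib, mul_comm, ← smul_eq_mul, ← sum_const]
    refine sum_le_sum fun x hx => ?_
    have := (hne x hx).card_pos
    split_ifs <;> omega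
  omega

end Finset

namespace SimpleGraph

variable (G : SimpleGraph V) [Fintype V] [DecidableRel G.Adj]

def leafFinset : Finset V := {v | G.degree v = 1}

def supportVertexFinset : Finset V := {v | ∃ u, G.Adj v u ∧ G.degree u = 1}

variable {G}

@[simp]
theorem mem_leafFinset {v : V} : v ∈ G.leafFinset ↔ G.degree v = 1 := by
  simp [leafFinset]

@[simp]
theorem mem_supportVertexFinset {v : V} :
    v ∈ G.supportVertexFinset ↔ ∃ u, G.Adj v u ∧ G.degree u = 1 := by
  simp [supportVertexFinset]

theorem neighborFinset_eq_singleton_of_degree_eq_one {ℓ s : V}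
    (hℓ : G.degree ℓ = 1) (hs : G.Adj ℓ s) : G.neighborFinset ℓ = {s} := by
  obtain ⟨b, hb⟩ := card_eq_one.1 (G.card_neighborFinset_eq_degree ℓ ▸ hℓ)
  have hsb : s ∈ G.neighborFinset ℓ := (G.mem_neighborFinset ℓ s).2 hs
  rw [hb, mem_singleton] at hsb
  rw [hb, hsb]

theorem eq_of_adj_of_degree_eq_one {ℓ a b : V}
    (hℓ : G.degree ℓ = 1) (ha : G.Adj ℓ a) (hb : G.Adj ℓ b) : a = b := by
  have : b ∈ G.neighborFinset ℓ := (G.mem_neighborFinset ℓ b).2 hb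
  rw [neighborFinset_eq_singleton_of_degree_eq_one hℓ ha, mem_singleton] at this
  exact this.symm

theorem Connected.not_adj_of_degree_eq_one [DecidableEq V]
    (hG : G.Connected) (hV : 3 ≤ Fintype.card V) {u v : V} (hu : G.degree u = 1)
    (hv : G.degree v = 1) : ¬ G.Adj u v := by
  intro huv
  have hcard : #({u, v} : Finset V) < #(univ : Finset V) :=
    card_le_two.trans_lt (by rw [card_univ]; omega)
  obtain ⟨w, -, hw⟩ := exists_mem_notMem_of_card_lt_card hcard
  obtain ⟨d, -, hd, hd'⟩ := (hG.preconnected u w).some.exists_boundary_dart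
    {u, v} (by simp) (by simpa using hw)
  rcases hd with hd | hd
  · exact hd' (.inr (eq_of_adj_of_degree_eq_one hu (hd ▸ d.adj) huv))
  · exact hd' (.inl (eq_of_adj_of_degree_eq_one hv (hd ▸ d.adj) huv.symm))

theorem sum_card_neighborFinset_inter_add_sum_degree_le [DecidableEq V] {A B K : Finset V}
    (hAB : Disjoint A B) (hKA : Disjoint K A) (hKB : Disjoint K B)
    (hK : ∀ u ∈ K, ∀ v ∈ K, ¬ G.Adj u v) :
    ∑ x ∈ A, #(G.neighborFinset x ∩ B) + ∑ v ∈ K, G.degree v ≤ #G.edgeFinset := by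
  set E₁ := A.biUnion fun x => (G.neighborFinset x ∩ B).image fun y => s(x, y)
  set E₂ := K.biUnion fun v => G.incidenceFinset v
  have hE₁ : #E₁ = ∑ x ∈ A, #(G.neighborFinset x ∩ B) := by
    rw [card_biUnion]
    · refine sum_congr rfl fun x _ => card_image_of_injective _ fun y z h => ?_
      rcases Sym2.eq_iff.1 h with ⟨-, h⟩ | ⟨h, h'⟩
      exacts [h, h'.trans h]
    · intro x hx y hy hxy
      rw [Function.onFun, Finset.disjoint_left]
      simp only [mem_image, mem_inter]
      rintro _ ⟨z, ⟨-, hz⟩, rfl⟩ ⟨w, ⟨-, hw⟩, h⟩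
      rcases Sym2.eq_iff.1 h with ⟨rfl, -⟩ | ⟨rfl, -⟩
      · exact hxy rfl
      · exact Finset.disjoint_left.1 hAB hy hz
  have hE₂ : #E₂ = ∑ v ∈ K, G.degree v := by
    rw [card_biUnion]
    · exact sum_congr rfl fun v _ => G.card_incidenceFinset_eq_degree v
    · intro u hu v hv huv
      rw [Function.onFun, ← disjoint_coe, coe_incidenceFinset, coe_incidenceFinset,
        Set.disjoint_iff_inter_eq_empty]
      exact G.incidenceSet_inter_incidenceSet_of_not_adj (hK u hu v hv) huv
  have hdisj : Disjoint E₁ E₂ := by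
    rw [Finset.disjoint_left]
    simp only [E₁, E₂, mem_biUnion, mem_image, mem_inter, mem_incidenceFinset]
    rintro _ ⟨x, hx, y, ⟨-, hy⟩, rfl⟩ ⟨v, hv, -, hxy⟩
    rcases Sym2.mem_iff.1 hxy with rfl | rfl
    · exact Finset.disjoint_left.1 hKA hv hx
    · exact Finset.disjoint_left.1 hKB hv hy
  have hsub : E₁ ∪ E₂ ⊆ G.edgeFinset := by
    simp only [E₁, E₂, union_subset_iff, biUnion_subset, image_subset_iff, mem_inter,
      mem_neighborFinset, mem_edgeFinset, mem_edgeSet]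
    refine ⟨fun _ _ _ h => h.1, fun v _ => ?_⟩
    rw [incidenceFinset_eq_filter]
    exact filter_subset _ _
  rw [← hE₁, ← hE₂, ← card_union_of_disjoint hdisj]
  exact card_le_card hsub

end SimpleGraph

open SimpleGraph

section LocatingDominating

variable [DecidableEq V] [Fintype V] {G : SimpleGraph V} [DecidableRel G.Adj] {D : Finset V}

theorem isLD_univ : IsLD G univ :=
  ⟨fun x => ⟨x, by simp⟩, fun x hx => absurd (mem_univ x) hx⟩

theorem exists_isLD_card_eq_gammaLD : ∃ D, IsLD G D ∧ #D = gammaLD G :=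
  Nat.sInf_mem (s := {k | ∃ D : Finset V, IsLD G D ∧ #D = k}) ⟨_, univ, isLD_univ, rfl⟩

theorem IsLD.neighborFinset_inter_nonempty (hD : IsLD G D) {x : V} (hx : x ∉ D) :
    (G.neighborFinset x ∩ D).Nonempty := by
  obtain ⟨y, hy⟩ := hD.1 x
  rw [mem_inter, mem_insert] at hy
  obtain ⟨rfl | hyx, hyD⟩ := hy
  · exact absurd hyD hx
  · exact ⟨y, mem_inter.2 ⟨hyx, hyD⟩⟩

theorem IsLD.mem_of_adj_of_degree_eq_one (hD : IsLD G D) {ℓ s : V} (hℓ : G.degree ℓ = 1)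
    (hs : G.Adj ℓ s) (hsD : s ∉ D) : ℓ ∈ D := by
  by_contra hℓD
  obtain ⟨y, hy⟩ := hD.neighborFinset_inter_nonempty hℓD
  rw [neighborFinset_eq_singleton_of_degree_eq_one hℓ hs, singleton_inter_of_notMem hsD] at hy
  exact notMem_empty y hy

theorem IsLD.eq_of_adj_of_degree_eq_one (hD : IsLD G D) {ℓ₁ ℓ₂ s : V}
    (h₁ : G.degree ℓ₁ = 1) (h₂ : G.degree ℓ₂ = 1) (hs₁ : G.Adj ℓ₁ s) (hs₂ : G.Adj ℓ₂ s)
    (hℓ₁ : ℓ₁ ∉ D) (hℓ₂ : ℓ₂ ∉ D) : ℓ₁ = ℓ₂ := by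
  by_contra hne
  have hsD : s ∈ D := by
    by_contra hsD
    exact hℓ₁ (hD.mem_of_adj_of_degree_eq_one h₁ hs₁ hsD)
  refine hD.2 ℓ₁ hℓ₁ ℓ₂ hℓ₂ hne ?_
  rw [neighborFinset_eq_singleton_of_degree_eq_one h₁ hs₁,
    neighborFinset_eq_singleton_of_degree_eq_one h₂ hs₂]

end LocatingDominating

section Pruning

variable [DecidableEq V] [Fintype V] {G : SimpleGraph V} [DecidableRel G.Adj] {D : Finset V}
  {rep : V → V}

variable (G D rep) in
def prunedLeaves : Finset V := (G.leafFinset ∩ D) \ (G.supportVertexFinset \ D).image rep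

theorem prunedLeaves_subset : prunedLeaves G D rep ⊆ D :=
  sdiff_subset.trans inter_subset_right

theorem degree_eq_one_of_mem_prunedLeaves {ℓ : V} (hℓ : ℓ ∈ prunedLeaves G D rep) :
    G.degree ℓ = 1 :=
  mem_leafFinset.1 (mem_inter.1 (mem_sdiff.1 hℓ).1).1

variable (hrep : ∀ s ∈ G.supportVertexFinset, G.Adj s (rep s) ∧ G.degree (rep s) = 1)
include hrep

theorem notMem_or_eq_of_notMem_prunedLeaves {ℓ s : V} (hℓ : G.degree ℓ = 1) (hs : G.Adj ℓ s)
    (hℓK : ℓ ∉ prunedLeaves G D rep) : ℓ ∉ D ∨ (s ∉ D ∧ ℓ = rep s) := by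
  by_cases hℓD : ℓ ∈ D
  · simp only [prunedLeaves, mem_sdiff, mem_inter, mem_leafFinset, hℓ, hℓD, true_and,
      not_not, mem_image] at hℓK
    obtain ⟨s', ⟨hs'S, hs'D⟩, rfl⟩ := hℓK
    obtain rfl := eq_of_adj_of_degree_eq_one hℓ (hrep s' hs'S).1.symm hs
    exact .inr ⟨hs'D, rfl⟩
  · exact .inl hℓD

theorem card_leafFinset_le_card_prunedLeaves_add (hD : IsLD G D) :
    #G.leafFinset ≤ #(prunedLeaves G D rep) + #G.supportVertexFinset := by
  refine (card_le_card_sdiff_add_card (t := prunedLeaves G D rep)).trans ?_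
  rw [add_comm]
  refine Nat.add_le_add_left (card_le_card_of_forall_subsingleton G.Adj ?_ ?_) _
  · intro ℓ hℓ
    have hℓ₁ := mem_leafFinset.1 (mem_sdiff.1 hℓ).1
    obtain ⟨s, hs⟩ := card_eq_one.1 (G.card_neighborFinset_eq_degree ℓ ▸ hℓ₁)
    have hadj : G.Adj ℓ s := (G.mem_neighborFinset ℓ s).1 (hs ▸ mem_singleton_self s)
    exact ⟨s, mem_supportVertexFinset.2 ⟨ℓ, hadj.symm, hℓ₁⟩, hadj⟩
  · rintro s - ℓ₁ ⟨h₁, hs₁⟩ ℓ₂ ⟨h₂, hs₂⟩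
    obtain ⟨h₁, hK₁⟩ := mem_sdiff.1 h₁
    obtain ⟨h₂, hK₂⟩ := mem_sdiff.1 h₂
    rw [mem_leafFinset] at h₁ h₂
    rcases notMem_or_eq_of_notMem_prunedLeaves hrep h₁ hs₁ hK₁ with hD₁ | ⟨hsD, rfl⟩ <;>
      rcases notMem_or_eq_of_notMem_prunedLeaves hrep h₂ hs₂ hK₂ with hD₂ | ⟨hsD', rfl⟩
    · exact hD.eq_of_adj_of_degree_eq_one h₁ h₂ hs₁ hs₂ hD₁ hD₂
    · exact absurd (hD.mem_of_adj_of_degree_eq_one h₁ hs₁ hsD') hD₁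
    · exact absurd (hD.mem_of_adj_of_degree_eq_one h₂ hs₂ hsD) hD₂
    · rfl

theorem neighborFinset_inter_sdiff_prunedLeaves (hD : IsLD G D) {x : V} (hx : x ∉ D) :
    G.neighborFinset x ∩ (D \ prunedLeaves G D rep) = G.neighborFinset x ∩ D ∨
      (x ∈ G.supportVertexFinset ∧ rep x ∈ G.neighborFinset x ∩ (D \ prunedLeaves G D rep)) := by
  by_cases hxS : x ∈ G.supportVertexFinset
  · refine .inr ⟨hxS, ?_⟩
    obtain ⟨hadj, hleaf⟩ := hrep x hxS
    refine mem_inter.2 ⟨(G.mem_neighborFinset x _).2 hadj,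
      mem_sdiff.2 ⟨hD.mem_of_adj_of_degree_eq_one hleaf hadj.symm hx, fun hK => ?_⟩⟩
    exact (mem_sdiff.1 hK).2 (mem_image_of_mem rep (mem_sdiff.2 ⟨hxS, hx⟩))
  · refine .inl (ext fun ℓ => ?_)
    simp only [mem_inter, mem_sdiff, mem_neighborFinset]
    refine ⟨fun h => ⟨h.1, h.2.1⟩, fun h => ⟨h.1, h.2, fun hK => hxS ?_⟩⟩
    exact mem_supportVertexFinset.2 ⟨ℓ, h.1, degree_eq_one_of_mem_prunedLeaves hK⟩

theorem neighborFinset_inter_sdiff_prunedLeaves_nonempty (hD : IsLD G D) {x : V} (hx : x ∉ D) :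
    (G.neighborFinset x ∩ (D \ prunedLeaves G D rep)).Nonempty := by
  rcases neighborFinset_inter_sdiff_prunedLeaves hrep hD hx with h | ⟨-, h⟩
  · exact h ▸ hD.neighborFinset_inter_nonempty hx
  · exact ⟨rep x, h⟩

theorem injOn_neighborFinset_inter_sdiff_prunedLeaves (hD : IsLD G D) :
    Set.InjOn (fun x => G.neighborFinset x ∩ (D \ prunedLeaves G D rep)) ↑Dᶜ := by
  set t := fun x => G.neighborFinset x ∩ (D \ prunedLeaves G D rep)
  have hprivate : ∀ x y, x ∈ G.supportVertexFinset → rep x ∈ t x → t x = t y → x = y := by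
    intro x y hxS hx hxy
    have hy : rep x ∈ t y := hxy ▸ hx
    exact eq_of_adj_of_degree_eq_one (hrep x hxS).2 ((G.mem_neighborFinset _ _).1
      (mem_inter.1 hx).1).symm ((G.mem_neighborFinset _ _).1 (mem_inter.1 hy).1).symm
  intro x hx y hy hxy
  rw [coe_compl, Set.mem_compl_iff, mem_coe] at hx hy
  rcases neighborFinset_inter_sdiff_prunedLeaves hrep hD hx with hx' | ⟨hxS, hxr⟩
  · rcases neighborFinset_inter_sdiff_prunedLeaves hrep hD hy with hy' | ⟨hyS, hyr⟩
    · by_contra hne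
      exact hD.2 x hx y hy hne (hx'.symm.trans (hxy.trans hy'))
    · exact (hprivate y x hyS hyr hxy.symm).symm
  · exact hprivate x y hxS hxr hxy

end Pruning

theorem IsLD.card_add_one_add_two_mul_card_leafFinset_le [DecidableEq V] [Fintype V]
    {G : SimpleGraph V} [DecidableRel G.Adj] {D : Finset V} (hD : IsLD G D) (hT : G.IsTree)
    (hV : 3 ≤ Fintype.card V) :
    Fintype.card V + 1 + 2 * #G.leafFinset ≤ 3 * #D + 2 * #G.supportVertexFinset := by
  choose! rep hrep using fun s (hs : s ∈ G.supportVertexFinset) => mem_supportVertexFinset.1 hs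
  set K := prunedLeaves G D rep
  have hcount :
      2 * (Fintype.card V - #D) ≤ ∑ x ∈ Dᶜ, #(G.neighborFinset x ∩ (D \ K)) + (#D - #K) := by
    rw [← card_compl, ← card_sdiff_of_subset prunedLeaves_subset]
    exact two_mul_card_le_sum_card_add_card (fun _ _ => inter_subset_right)
      (fun _ hx => neighborFinset_inter_sdiff_prunedLeaves_nonempty hrep hD (mem_compl.1 hx))
      (injOn_neighborFinset_inter_sdiff_prunedLeaves hrep hD)
  have hedge : ∑ x ∈ Dᶜ, #(G.neighborFinset x ∩ (D \ K)) + ∑ v ∈ K, G.degree v ≤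
      #G.edgeFinset :=
    sum_card_neighborFinset_inter_add_sum_degree_le (disjoint_compl_left.mono_right sdiff_subset)
      (disjoint_compl_right.mono_left prunedLeaves_subset) disjoint_sdiff
      fun u hu v hv => hT.connected.not_adj_of_degree_eq_one hV
        (degree_eq_one_of_mem_prunedLeaves hu) (degree_eq_one_of_mem_prunedLeaves hv)
  have hdegK : ∑ v ∈ K, G.degree v = #K := by
    rw [card_eq_sum_ones]
    exact sum_congr rfl fun v hv => degree_eq_one_of_mem_prunedLeaves hv
  have hleaves : #G.leafFinset ≤ #K + #G.supportVertexFinset :=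
    card_leafFinset_le_card_prunedLeaves_add hrep hD
  have hedges := hT.card_edgeFinset
  have hKD : #K ≤ #D := card_le_card prunedLeaves_subset
  have hDV : #D ≤ Fintype.card V := card_le_univ D
  omega

/-- if `T` is a tree on `n ≥ 4` vertices with `L` leaves and `S`
support vertices, then `γ^LD(T) ≥ (n + 1 + 2(L − S))/3`, stated here as
`3·γ^LD(T) + 2S ≥ n + 1 + 2L`. -/
theorem stmt17 [DecidableEq V] [Fintype V] (G : SimpleGraph V) [DecidableRel G.Adj]
    (hT : G.IsTree) (hn : 4 ≤ Fintype.card V) :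
    Fintype.card V + 1 + 2 * (univ.filter fun v : V => G.degree v = 1).card ≤
      3 * gammaLD G +
        2 * (univ.filter fun v : V => ∃ u, G.Adj v u ∧ G.degree u = 1).card := by
  obtain ⟨D, hD, hcard⟩ := exists_isLD_card_eq_gammaLD (G := G)
  rw [← hcard]
  exact hD.card_add_one_add_two_mul_card_leafFinset_le hT (by omega)
end

section
/- Let T be a tree on n ≥ 4 vertices in which every support vertex is adjacent to exactly one leaf. Then γ^ID(T) ≥ (n + 3)/3. -/
open Finset

variable {V : Type*}

/-! Write `t x = |N(x) ∩ D|` for an identifying code `D`. Domination gives `t ≥ 1` off `D`, so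
`2 |V ∖ D| ≤ ∑_{x ∉ D} t x + |A|` with `A = {x ∉ D | t x = 1}`. A vertex of `A` goes to its unique
code neighbour `d`, which must have a neighbour in `D` (otherwise `x` and `d` both have trace `{d}`);
separation makes this injective, so `|A|` is bounded by the number of non-isolated vertices of
`G[D]`, hence by `|D|` and by `∑_{d ∈ D} t d`. As `∑_{d ∈ D} t d + 2 ∑_{x ∉ D} t x ≤ 2 |E|`, this
gives `4 |V| ≤ 2 |E| + 5 |D|`, i.e. `2n + 2 ≤ 5 |D|` in a tree, and `|D| ≥ 3` (from `n < 2 ^ |D|`)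
turns this into `n + 3 ≤ 3 |D|`. -/

namespace SimpleGraph

variable [Fintype V] [DecidableEq V] (G : SimpleGraph V) [DecidableRel G.Adj]

theorem sum_card_neighborFinset_inter_eq_sum_degree (D : Finset V) :
    ∑ x, #(G.neighborFinset x ∩ D) = ∑ d ∈ D, G.degree d := by
  convert sum_card_bipartiteAbove_eq_sum_card_bipartiteBelow (s := univ) (t := D) (r := G.Adj)
    using 2 with x - d -
  · congr 1; ext d; simp [and_comm]
  · rw [← G.card_neighborFinset_eq_degree]; congr 1; ext x; simp [G.adj_comm]

theorem sum_card_neighborFinset_inter_add_sum_compl_le (D : Finset V) :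
    ∑ x, #(G.neighborFinset x ∩ D) + ∑ x ∈ Dᶜ, #(G.neighborFinset x ∩ D) ≤
      2 * #G.edgeFinset := by
  rw [sum_card_neighborFinset_inter_eq_sum_degree, ← G.sum_degrees_eq_twice_card_edges,
    ← D.sum_add_sum_compl fun v => G.degree v]
  gcongr with x
  exact (card_le_card inter_subset_left).trans (G.card_neighborFinset_eq_degree x).le

variable {G} in
theorem IsTree.insert_neighborFinset_injective (hT : G.IsTree)
    (h3 : 3 ≤ Fintype.card V) :
    Function.Injective fun x => insert x (G.neighborFinset x) := by
  intro x y hxy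
  have mem_iff (w : V) : w = x ∨ G.Adj x w ↔ w = y ∨ G.Adj y w := by
    simpa using congrArg (w ∈ ·) hxy
  by_contra hne
  have hadj : G.Adj x y := ((mem_iff y).2 (.inl rfl)).resolve_left (Ne.symm hne)
  obtain ⟨z, -, hz⟩ : ∃ z ∈ univ, z ∉ ({x, y} : Finset V) :=
    exists_mem_notMem_of_card_lt_card (card_le_two.trans_lt (by rw [card_univ]; omega))
  obtain ⟨d, -, hd, hd'⟩ := (hT.connected.preconnected x z).some.exists_boundary_dart
    {x, y} (by simp) (by simpa using hz)
  have hwx : d.snd ≠ x := fun h => hd' (by simp [h])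
  have hwy : d.snd ≠ y := fun h => hd' (by simp [h])
  have hxw : G.Adj x d.snd := by
    rcases hd with h | h
    · exact h ▸ d.adj
    · exact ((mem_iff _).2 (.inr (h ▸ d.adj))).resolve_left hwx
  have hyw : G.Adj y d.snd := ((mem_iff _).1 (.inr hxw)).resolve_left hwy
  exact hT.isAcyclic.cliqueFree le_rfl {x, y, d.snd} (is3Clique_triple_iff.2 ⟨hadj, hxw, hyw⟩)

end SimpleGraph

section IsIdCode

variable [DecidableEq V] [Fintype V] {G : SimpleGraph V} [DecidableRel G.Adj] {D : Finset V}

theorem isIdCode_univ_s18 (hT : G.IsTree) (h3 : 3 ≤ Fintype.card V) : IsIdCode G univ :=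
  ⟨fun x => ⟨x, by simp⟩, fun _ _ hne h => hne <|
    hT.insert_neighborFinset_injective h3 (by simpa only [inter_univ] using h)⟩

theorem IsIdCode.card_lt_two_pow (hD : IsIdCode G D) : Fintype.card V < 2 ^ #D := by
  have hinj : Fintype.card V ≤ #(D.powerset.erase ∅) := by
    refine card_le_card_of_injOn (fun x => insert x (G.neighborFinset x) ∩ D)
      (fun x _ => mem_erase.2 ⟨(hD.1 x).ne_empty, mem_powerset.2 inter_subset_right⟩) ?_
    exact fun x _ y _ hxy => by_contra fun hne => hD.2 x y hne hxy
  rw [card_erase_of_mem (empty_mem_powerset D), card_powerset] at hinj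
  have := Nat.one_le_two_pow (n := #D)
  omega

theorem two_mul_card_compl_le (hdom : ∀ x, (insert x (G.neighborFinset x) ∩ D).Nonempty) :
    2 * #Dᶜ ≤ ∑ x ∈ Dᶜ, #(G.neighborFinset x ∩ D) +
      #{x ∈ Dᶜ | #(G.neighborFinset x ∩ D) = 1} := by
  rw [card_filter, ← sum_add_distrib, mul_comm, ← smul_eq_mul, ← sum_const]
  refine sum_le_sum fun x hx => ?_
  have : 0 < #(G.neighborFinset x ∩ D) := by
    simpa [insert_inter_of_notMem (mem_compl.1 hx)] using hdom x
  split_ifs <;> omega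

theorem card_filter_compl_eq_one_le (hsep : ∀ x y, x ≠ y →
      insert x (G.neighborFinset x) ∩ D ≠ insert y (G.neighborFinset y) ∩ D) :
    #{x ∈ Dᶜ | #(G.neighborFinset x ∩ D) = 1} ≤
      #{d ∈ D | #(G.neighborFinset d ∩ D) ≠ 0} := by
  set A : Finset V := {x ∈ Dᶜ | #(G.neighborFinset x ∩ D) = 1}
  have trace_eq {x d : V} (hx : x ∈ A)
      (hd : d ∈ G.neighborFinset x ∩ D) : insert x (G.neighborFinset x) ∩ D = {d} := by
    rw [mem_filter, mem_compl] at hx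
    obtain ⟨a, ha⟩ := card_eq_one.1 hx.2
    rw [ha, mem_singleton] at hd
    rw [insert_inter_of_notMem hx.1, ha, hd]
  refine card_le_card_of_forall_subsingleton (fun x d => d ∈ G.neighborFinset x ∩ D) ?_ ?_
  · intro x hx
    obtain ⟨d, hd⟩ := card_pos.1 ((mem_filter.1 hx).2.symm ▸ Nat.one_pos)
    refine ⟨d, mem_filter.2 ⟨(mem_inter.1 hd).2, fun hiso => ?_⟩, hd⟩
    have hxd : x ≠ d :=
      (ne_of_mem_of_not_mem (mem_inter.1 hd).2 (mem_compl.1 (mem_filter.1 hx).1)).symm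
    refine hsep x d hxd ?_
    rw [trace_eq hx hd, insert_inter_of_mem (mem_inter.1 hd).2, card_eq_zero.1 hiso, insert_empty]
  · intro d _ x hx y hy
    by_contra hne
    exact hsep x y hne ((trace_eq hx.1 hx.2).trans (trace_eq hy.1 hy.2).symm)

theorem IsIdCode.four_mul_card_le (hD : IsIdCode G D) :
    4 * Fintype.card V ≤ 2 * #G.edgeFinset + 5 * #D := by
  have hsum := G.sum_card_neighborFinset_inter_add_sum_compl_le D
  have hsplit := D.sum_add_sum_compl fun x => #(G.neighborFinset x ∩ D)
  have hcompl := two_mul_card_compl_le hD.1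
  have hsep := card_filter_compl_eq_one_le hD.2
  have hD₁ : #{d ∈ D | #(G.neighborFinset d ∩ D) ≠ 0} ≤ #D := card_filter_le _ _
  have hD₂ : #{d ∈ D | #(G.neighborFinset d ∩ D) ≠ 0} ≤
      ∑ d ∈ D, #(G.neighborFinset d ∩ D) := by
    rw [card_filter]
    exact sum_le_sum fun d _ => by split_ifs <;> omega
  have hcard := card_add_card_compl D
  omega

theorem IsIdCode.two_mul_card_add_two_le (hD : IsIdCode G D) (hT : G.IsTree) :
    2 * Fintype.card V + 2 ≤ 5 * #D := by
  have := hD.four_mul_card_le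
  have := hT.card_edgeFinset
  omega

end IsIdCode

theorem stmt18_general [DecidableEq V] [Fintype V] (G : SimpleGraph V) [DecidableRel G.Adj]
    (hT : G.IsTree) (hn : 4 ≤ Fintype.card V) :
    Fintype.card V + 3 ≤ 3 * gammaID G := by
  obtain ⟨D, hD, hcard⟩ : gammaID G ∈ {k | ∃ D : Finset V, IsIdCode G D ∧ #D = k} :=
    Nat.sInf_mem ⟨_, univ, isIdCode_univ_s18 hT (by omega), rfl⟩
  have hD₃ : 3 ≤ #D := by
    by_contra! h
    have := hD.card_lt_two_pow.trans_le (Nat.pow_le_pow_right two_pos (Nat.le_of_lt_succ h))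
    omega
  have := hD.two_mul_card_add_two_le hT
  omega

/-- if `T` is a tree on `n ≥ 4` vertices in which every support
vertex is adjacent to exactly one leaf, then `γ^ID(T) ≥ (n + 3)/3`, stated here as
`3·γ^ID(T) ≥ n + 3`. -/
theorem stmt18 [DecidableEq V] [Fintype V] (G : SimpleGraph V) [DecidableRel G.Adj]
    (hT : G.IsTree) (hn : 4 ≤ Fintype.card V)
    (hsupp : ∀ v : V, (∃ u, G.Adj v u ∧ G.degree u = 1) →
      ((G.neighborFinset v).filter fun u => G.degree u = 1).card = 1) :
    Fintype.card V + 3 ≤ 3 * gammaID G :=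
  stmt18_general G hT hn
end

section
/- Let T be a tree on n ≥ 4 vertices in which no two distinct vertices have equal open neighborhoods. Then γ^OLD(T) ≥ (n + 1)/2. -/
open Finset

variable {V : Type*}

/-- if `T` is a tree on `n ≥ 4` vertices in which no two distinct
vertices have equal open neighborhoods, then `γ^OLD(T) ≥ (n + 1)/2`, stated here as
`2·γ^OLD(T) ≥ n + 1`. -/
theorem stmt19 [DecidableEq V] [Fintype V] (G : SimpleGraph V) [DecidableRel G.Adj]
    (hT : G.IsTree) (hn : 4 ≤ Fintype.card V)
    (hdist : ∀ x y : V, G.neighborFinset x = G.neighborFinset y → x = y) :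
    Fintype.card V + 1 ≤ 2 * gammaOLD G := by
  classical
  have key : ∀ D : Finset V, IsOLD G D → Fintype.card V + 1 ≤ 2 * D.card := by
    rintro D ⟨hdom, hloc⟩
    set f : V → ℕ := fun x => (G.neighborFinset x ∩ D).card with hf
    -- A : sum of f = sum of degrees over D
    have hA : ∑ x : V, f x = ∑ d ∈ D, G.degree d := by
      have h1 : ∀ x : V, f x = ∑ d ∈ D, (if G.Adj x d then 1 else 0) := by
        intro x
        rw [hf]
        simp only
        rw [← Finset.sum_filter, Finset.sum_const, smul_eq_mul, mul_one]
        congr 1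
        ext d
        simp [SimpleGraph.mem_neighborFinset, and_comm]
      simp only [h1]
      rw [Finset.sum_comm]
      refine Finset.sum_congr rfl fun d _ => ?_
      rw [← Finset.sum_filter, Finset.sum_const, smul_eq_mul, mul_one,
        SimpleGraph.degree]
      congr 1
      ext x
      simp [SimpleGraph.mem_neighborFinset, G.adj_comm]
    set S : Finset V := univ.filter (fun x => f x = 1) with hS
    set g : V → V := fun x => (hdom x).choose with hg
    have hgmem : ∀ x : V, g x ∈ G.neighborFinset x ∩ D := fun x => (hdom x).choose_spec
    have hsing : ∀ x ∈ S, G.neighborFinset x ∩ D = {g x} := by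
      intro x hx
      have h1 : f x = 1 := (Finset.mem_filter.mp hx).2
      rw [hf] at h1
      obtain ⟨a, ha⟩ := Finset.card_eq_one.mp h1
      have := hgmem x
      rw [ha] at this ⊢
      rw [Finset.mem_singleton] at this
      rw [this]
    have hSD : S.card ≤ D.card := by
      refine Finset.card_le_card_of_injOn g
        (fun x _ => (Finset.mem_inter.mp (hgmem x)).2) ?_
      intro x hx y hy hxy
      by_contra hne
      exact hloc x y hne (by rw [hsing x hx, hsing y hy, hxy])
    -- B
    have hsplitB : ∑ x ∈ univ \ S, f x + ∑ x ∈ S, f x = ∑ x : V, f x :=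
      Finset.sum_sdiff (Finset.filter_subset _ _)
    have h1B : ∑ x ∈ S, f x = S.card := by
      rw [Finset.sum_congr rfl fun x hx => (Finset.mem_filter.mp hx).2,
        Finset.sum_const, smul_eq_mul, mul_one]
    have h2B : 2 * (univ \ S).card ≤ ∑ x ∈ univ \ S, f x := by
      rw [mul_comm, ← smul_eq_mul, ← Finset.sum_const]
      refine Finset.sum_le_sum fun x hx => ?_
      have h1x : 1 ≤ f x := Finset.card_pos.mpr (hdom x)
      have hne1 : f x ≠ 1 := by
        have := Finset.mem_sdiff.mp hx
        simpa [hS] using this.2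
      omega
    have hcB : S.card + (univ \ S).card = Fintype.card V := by
      have h := Finset.card_sdiff_of_subset (Finset.subset_univ S)
      have h2 := Finset.card_le_univ S
      rw [Finset.card_univ] at h
      omega
    -- C
    have hsplitC : ∑ x ∈ univ \ D, G.degree x + ∑ x ∈ D, G.degree x = ∑ x : V, G.degree x :=
      Finset.sum_sdiff (Finset.subset_univ D)
    have h2C : (univ \ D).card ≤ ∑ x ∈ univ \ D, G.degree x := by
      rw [Finset.card_eq_sum_ones]
      refine Finset.sum_le_sum fun x _ => ?_
      have h1x : 1 ≤ f x := Finset.card_pos.mpr (hdom x)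
      have : f x ≤ G.degree x := by
        rw [hf, SimpleGraph.degree]
        exact Finset.card_le_card Finset.inter_subset_left
      omega
    have hdeg : ∑ x : V, G.degree x = 2 * G.edgeFinset.card :=
      G.sum_degrees_eq_twice_card_edges
    have hedge : G.edgeFinset.card + 1 = Fintype.card V := hT.card_edgeFinset
    have hDc : D.card + (univ \ D).card = Fintype.card V := by
      have h := Finset.card_sdiff_of_subset (Finset.subset_univ D)
      have h2 := Finset.card_le_univ D
      rw [Finset.card_univ] at h
      omega
    omega
  -- the universe is an OLD set
  have hU : IsOLD G (univ : Finset V) := by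
    constructor
    · intro x
      rw [Finset.inter_univ, ← Finset.card_pos, ← SimpleGraph.degree,
        SimpleGraph.degree_pos_iff_exists_adj]
      obtain ⟨y, hy⟩ := Fintype.exists_ne_of_one_lt_card (by omega) x
      obtain ⟨p⟩ := hT.isConnected.preconnected x y
      obtain ⟨u, h, q, _⟩ := SimpleGraph.Walk.not_nil_iff.mp
        (SimpleGraph.Walk.not_nil_of_ne (p := p) (Ne.symm hy))
      exact ⟨u, h⟩
    · intro x y hxy h
      rw [Finset.inter_univ, Finset.inter_univ] at h
      exact hxy (hdist x y h)
  have hne : {k | ∃ D : Finset V, IsOLD G D ∧ D.card = k}.Nonempty :=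
    ⟨_, (univ : Finset V), hU, rfl⟩
  obtain ⟨D, hD, hcard⟩ := Nat.sInf_mem hne
  rw [gammaOLD, ← hcard]
  exact key D hD
end
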